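/- arXiv:2311.01062 — 8 statements merged into one kernel-verified Lean document; each statement's English description precedes it below -/
import Mathlib

section
/- Conversely, if every sequence (a_n) of complex numbers with Σ |a_n|² β_n < ∞ satisfies sup_{|z|<1} |Σ a_n z^n| < ∞, then Σ_{n≥0} 1/β_n < ∞. (Equivalently: if H²(β) ⊆ H^∞ then Σ 1/β_n < ∞.) -/
open Filter Topology

/-- If every coefficient sequence with `∑ ‖a n‖² β n < ∞` gives a function bounded on
the unit disk (i.e. `H²(β) ⊆ H^∞`), then `∑ 1/β n < ∞`. -/
theorem stmt2 (β : ℕ → ℝ) (hpos : ∀ n, 0 < β n)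
    (hliminf : 1 ≤ Filter.liminf (fun n : ℕ => β n ^ ((1 : ℝ) / n)) Filter.atTop)
    (hbdd : ∀ a : ℕ → ℂ, (Summable fun n => ‖a n‖ ^ 2 * β n) →
      ∃ M : ℝ, ∀ z : ℂ, ‖z‖ < 1 → ‖∑' n : ℕ, a n * z ^ n‖ ≤ M) :
    Summable fun n => 1 / β n := by
  by_contra hns
  set d : ℕ → ℝ := fun n => 1 / β n with hd
  have hdpos : ∀ n, 0 < d n := fun n => one_div_pos.2 (hpos n)
  set S : ℕ → ℝ := fun n => ∑ i ∈ Finset.range (n + 1), d i with hSdef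
  have hSpos : ∀ n, 0 < S n := fun n =>
    Finset.sum_pos (fun i _ => hdpos i) ⟨0, Finset.mem_range.2 (Nat.succ_pos n)⟩
  have hSmono : Monotone S := by
    apply monotone_nat_of_le_succ
    intro n
    have : S (n + 1) = S n + d (n + 1) := by
      simp [hSdef, Finset.sum_range_succ]
    rw [this]
    linarith [hdpos (n + 1)]
  have hStop : Tendsto S atTop atTop := by
    have h1 : Tendsto (fun n => ∑ i ∈ Finset.range n, d i) atTop atTop :=
      (not_summable_iff_tendsto_nat_atTop_of_nonneg (fun n => (hdpos n).le)).1 hns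
    have h2 : Tendsto (fun n : ℕ => n + 1) atTop atTop := tendsto_add_atTop_nat 1
    exact h1.comp h2
  set c : ℕ → ℝ := fun n => d n / S n with hcdef
  have hcpos : ∀ n, 0 < c n := fun n => div_pos (hdpos n) (hSpos n)
  -- growth estimate from liminf
  have hgrow : ∀ t : ℝ, 0 < t → t < 1 → ∃ N : ℕ, ∀ n ≥ N, t ^ n ≤ β n := by
    intro t ht0 ht1
    have hne : {x : ℝ | ∀ᶠ n in atTop, x ≤ β n ^ ((1 : ℝ) / n)}.Nonempty := by
      by_contra hne
      rw [Set.not_nonempty_iff_eq_empty] at hne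
      rw [Filter.liminf_eq, hne, Real.sSup_empty] at hliminf
      linarith
    have hlt : t < sSup {x : ℝ | ∀ᶠ n in atTop, x ≤ β n ^ ((1 : ℝ) / n)} := by
      rw [Filter.liminf_eq] at hliminf
      linarith
    obtain ⟨x, hx, htx⟩ := exists_lt_of_lt_csSup hne hlt
    obtain ⟨N, hN⟩ := eventually_atTop.1 hx
    refine ⟨max N 1, fun n hn => ?_⟩
    have hn1 : 1 ≤ n := le_trans (le_max_right _ _) hn
    have hb : t < β n ^ ((1 : ℝ) / n) :=
      lt_of_lt_of_le htx (hN n (le_trans (le_max_left _ _) hn))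
    have hβ : (0 : ℝ) < β n := hpos n
    have hpow : t ^ n ≤ (β n ^ ((1 : ℝ) / n)) ^ n :=
      pow_le_pow_left₀ ht0.le hb.le n
    have heq : (β n ^ ((1 : ℝ) / n)) ^ n = β n := by
      have hn0 : (n : ℝ) ≠ 0 := Nat.cast_ne_zero.2 (by omega)
      rw [← Real.rpow_natCast (β n ^ ((1 : ℝ) / n)) n, ← Real.rpow_mul hβ.le,
        one_div, inv_mul_cancel₀ hn0, Real.rpow_one]
    rwa [heq] at hpow
  set a : ℕ → ℂ := fun n => ((c n : ℝ) : ℂ) with hadef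
  have hnorm : ∀ n, ‖a n‖ = c n := by
    intro n
    rw [hadef]
    simp [Real.norm_eq_abs, abs_of_pos (hcpos n)]
  -- Step A: the coefficient sequence is in H²(β)
  have hterm : ∀ n, ‖a n‖ ^ 2 * β n = d n / S n ^ 2 := by
    intro n
    rw [hnorm n, hcdef]
    have hb : β n ≠ 0 := (hpos n).ne'
    have hs : S n ≠ 0 := (hSpos n).ne'
    field_simp [hd]
    have hdb : d n * β n = 1 := by rw [hd]; exact one_div_mul_cancel hb
    rw [sq, mul_assoc, hdb, mul_one]
  have hbound2 : ∀ K, ∑ i ∈ Finset.range (K + 1), d i / S i ^ 2 ≤ 2 / S 0 - 1 / S K := by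
    intro K
    induction K with
    | zero =>
      have h0 : S 0 = d 0 := by
        show (∑ k ∈ Finset.range (0 + 1), d k) = d 0
        rw [Nat.zero_add, Finset.sum_range_one]
      have hd0 : d 0 ≠ 0 := (hdpos 0).ne'
      rw [Finset.sum_range_one, h0]
      apply le_of_eq
      field_simp
      ring
    | succ K ih =>
      rw [Finset.sum_range_succ]
      have h1 : S (K + 1) = S K + d (K + 1) := by simp [hSdef, Finset.sum_range_succ]
      have hK := hSpos K
      have hK1 := hSpos (K + 1)
      have hstep : d (K + 1) / S (K + 1) ^ 2 ≤ 1 / S K - 1 / S (K + 1) := by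
        rw [div_sub_div _ _ hK.ne' hK1.ne']
        have h2 : 1 * S (K + 1) - S K * 1 = d (K + 1) := by rw [h1]; ring
        rw [h2]
        have hle : S K * S (K + 1) ≤ S (K + 1) ^ 2 := by
          rw [sq]
          have : S K ≤ S (K + 1) := hSmono (Nat.le_succ K)
          nlinarith
        exact div_le_div_of_nonneg_left (hdpos (K + 1)).le (by positivity) hle
      linarith
  have hA : Summable (fun n => ‖a n‖ ^ 2 * β n) := by
    apply summable_of_sum_range_le (c := 2 / S 0)
      (fun n => mul_nonneg (by positivity) (hpos n).le)
    intro K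
    have heq : ∑ i ∈ Finset.range K, ‖a i‖ ^ 2 * β i = ∑ i ∈ Finset.range K, d i / S i ^ 2 :=
      Finset.sum_congr rfl (fun i _ => hterm i)
    rw [heq]
    cases K with
    | zero =>
      simp only [Finset.range_zero, Finset.sum_empty]
      have := hSpos 0
      positivity
    | succ K =>
      have := hbound2 K
      have := one_div_pos.2 (hSpos K)
      linarith
  obtain ⟨M, hM⟩ := hbdd a hA
  -- summability of the power series at each r ∈ (0,1)
  have hsumr : ∀ r : ℝ, 0 < r → r < 1 → Summable (fun n => c n * r ^ n) := by
    intro r hr0 hr1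
    set t : ℝ := (r + 1) / 2 with htdef
    have ht0 : 0 < t := by rw [htdef]; linarith
    have htr : r < t := by rw [htdef]; linarith
    have ht1 : t < 1 := by rw [htdef]; linarith
    obtain ⟨N, hN⟩ := hgrow t ht0 ht1
    rw [← summable_nat_add_iff N]
    have hgeo : Summable (fun n : ℕ => (1 / S 0 * (r / t) ^ N) * (r / t) ^ n) :=
      (summable_geometric_of_lt_one (by positivity) ((div_lt_one ht0).2 htr)).mul_left _
    apply Summable.of_nonneg_of_le
      (fun n => mul_nonneg (hcpos _).le (by positivity)) _ hgeo
    intro n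
    have hβt : t ^ (n + N) ≤ β (n + N) := hN _ (Nat.le_add_left N n)
    have htpow : (0 : ℝ) < t ^ (n + N) := pow_pos ht0 _
    have h1 : c (n + N) ≤ d (n + N) / S 0 := by
      rw [hcdef]
      exact div_le_div_of_nonneg_left (hdpos _).le (hSpos 0) (hSmono (Nat.zero_le _))
    have h2 : d (n + N) ≤ 1 / t ^ (n + N) := by
      rw [hd]
      exact one_div_le_one_div_of_le htpow hβt
    calc c (n + N) * r ^ (n + N) ≤ (1 / t ^ (n + N) / S 0) * r ^ (n + N) := by
          have hr : (0 : ℝ) ≤ r ^ (n + N) := by positivity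
          apply mul_le_mul_of_nonneg_right _ hr
          refine le_trans h1 ?_
          gcongr
          exact (hSpos 0).le
      _ = (1 / S 0 * (r / t) ^ N) * (r / t) ^ n := by
          have ht' : t ≠ 0 := ht0.ne'
          have hS' : S 0 ≠ 0 := (hSpos 0).ne'
          field_simp
          have e1 : t ^ n * t⁻¹ ^ n = 1 := by rw [← mul_pow, mul_inv_cancel₀ ht', one_pow]
          have e2 : t ^ N * t⁻¹ ^ N = 1 := by rw [← mul_pow, mul_inv_cancel₀ ht', one_pow]
          linear_combination (-(r ^ n * r ^ N)) * e1 - (r ^ n * r ^ N * t ^ n * t⁻¹ ^ n) * e2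
  -- partial sums of c are bounded by M
  have hpart : ∀ K, ∑ i ∈ Finset.range K, c i ≤ M := by
    intro K
    have hev : ∀ r ∈ Set.Ioo (0 : ℝ) 1, ∑ i ∈ Finset.range K, c i * r ^ i ≤ M := by
      rintro r ⟨hr0, hr1⟩
      have hsum := hsumr r hr0 hr1
      have hle : ∑ i ∈ Finset.range K, c i * r ^ i ≤ ∑' n, c n * r ^ n :=
        Summable.sum_le_tsum _ (fun i _ => mul_nonneg (hcpos i).le (by positivity)) hsum
      have hz : ‖((r : ℝ) : ℂ)‖ < 1 := by
        rw [Complex.norm_real, Real.norm_eq_abs, abs_of_pos hr0]; exact hr1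
      have hMr := hM (r : ℂ) hz
      have hts : (∑' n : ℕ, a n * (r : ℂ) ^ n) = ((∑' n, c n * r ^ n : ℝ) : ℂ) := by
        rw [Complex.ofReal_tsum]
        congr 1
        funext n
        rw [hadef]
        push_cast
        ring
      rw [hts, Complex.norm_real, Real.norm_eq_abs] at hMr
      calc ∑ i ∈ Finset.range K, c i * r ^ i ≤ ∑' n, c n * r ^ n := hle
        _ ≤ |∑' n, c n * r ^ n| := le_abs_self _
        _ ≤ M := hMr
    have hcont : Tendsto (fun r : ℝ => ∑ i ∈ Finset.range K, c i * r ^ i) (𝓝[<] 1)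
        (𝓝 (∑ i ∈ Finset.range K, c i * (1 : ℝ) ^ i)) := by
      apply Tendsto.mono_left _ nhdsWithin_le_nhds
      exact ((continuous_finset_sum (Finset.range K)
        fun i _ => continuous_const.mul (continuous_pow i)).tendsto 1)
    simp only [one_pow, mul_one] at hcont
    refine le_of_tendsto hcont ?_
    filter_upwards [Ioo_mem_nhdsLT_of_mem
      (show (1 : ℝ) ∈ Set.Ioc (0 : ℝ) 1 by constructor <;> norm_num)] with r hr
    exact hev r hr
  have hcsum : Summable c := summable_of_sum_range_le (fun n => (hcpos n).le) hpart
  -- derive contradiction: Σ d n / S n must diverge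
  have htail := tendsto_sum_nat_add c
  obtain ⟨N₁, hN₁, hN₁1⟩ :=
    (((tendsto_order.1 htail).2 (1 / 2) (by norm_num)).and (eventually_ge_atTop 1)).exists
  obtain ⟨N, rfl⟩ : ∃ N, N₁ = N + 1 := ⟨N₁ - 1, by omega⟩
  -- pick m with S m ≥ 2 * S N and m ≥ N + 1
  obtain ⟨m₀, hm₀⟩ := (hStop.eventually_ge_atTop (2 * S N)).exists
  set m : ℕ := max (N + 1) m₀ with hmdef
  have hmN : N + 1 ≤ m := le_max_left _ _
  have hSm : 2 * S N ≤ S m := le_trans hm₀ (hSmono (le_max_right _ _))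
  -- upper bound on the块 sum via the tail
  have hupper : ∑ i ∈ Finset.Ico (N + 1) (m + 1), c i ≤ ∑' k, c (k + (N + 1)) := by
    rw [Finset.sum_Ico_eq_sum_range]
    have hsummable : Summable (fun k => c ((N + 1) + k)) := by
      have := (summable_nat_add_iff (N + 1)).2 hcsum
      simpa [add_comm] using this
    have hle := Summable.sum_le_tsum (Finset.range (m + 1 - (N + 1)))
      (fun i _ => (hcpos _).le) hsummable
    refine le_trans hle ?_
    apply le_of_eq
    exact tsum_congr fun k => by rw [add_comm]
  -- lower bound on the block sum
  have hlower : (S m - S N) / S m ≤ ∑ i ∈ Finset.Ico (N + 1) (m + 1), c i := by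
    have hsum_d : ∑ i ∈ Finset.Ico (N + 1) (m + 1), d i = S m - S N := by
      rw [Finset.sum_Ico_eq_sub _ (by omega)]
    have h1 : ∑ i ∈ Finset.Ico (N + 1) (m + 1), d i / S m ≤
        ∑ i ∈ Finset.Ico (N + 1) (m + 1), c i := by
      apply Finset.sum_le_sum
      intro i hi
      rw [hcdef]
      have him : i ≤ m := by
        have := (Finset.mem_Ico.1 hi).2; omega
      exact div_le_div_of_nonneg_left (hdpos i).le (hSpos i) (hSmono him)
    calc (S m - S N) / S m = ∑ i ∈ Finset.Ico (N + 1) (m + 1), d i / S m := by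
          rw [← Finset.sum_div, hsum_d]
      _ ≤ ∑ i ∈ Finset.Ico (N + 1) (m + 1), c i := h1
  have hhalf : (1 : ℝ) / 2 ≤ (S m - S N) / S m := by
    rw [le_div_iff₀ (hSpos m)]
    linarith
  linarith [le_trans (le_trans hhalf hlower) hupper]
end

section
/- Suppose there is a constant K such that β_n · B_n ≤ K for all n, where B_n = Σ_{k=0}^n 1/(β_k β_{n−k}). Then for any sequences (a_n), (b_n) with Σ|a_n|²β_n < ∞ and Σ|b_n|²β_n < ∞, the convolution c_n = Σ_{k=0}^n a_k b_{n−k} satisfies Σ |c_n|² β_n ≤ K · (Σ|a_n|²β_n)(Σ|b_n|²β_n). In particular H²(β) is closed under multiplication. -/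
open Filter Topology

/-- If `β n * B n ≤ K` for all `n`, where `B n = ∑_{k=0}^n 1/(β k β (n-k))`, then for
coefficient sequences in `H²(β)` the convolution is again in `H²(β)`, with
`∑‖c n‖²β n ≤ K (∑‖a n‖²β n)(∑‖b n‖²β n)`. -/
theorem stmt3 (β : ℕ → ℝ) (hpos : ∀ n, 0 < β n) (K : ℝ)
    (hK : ∀ n : ℕ, β n * ∑ k ∈ Finset.range (n + 1), 1 / (β k * β (n - k)) ≤ K)
    (a b : ℕ → ℂ) (ha : Summable fun n => ‖a n‖ ^ 2 * β n)
    (hb : Summable fun n => ‖b n‖ ^ 2 * β n) :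
    (Summable fun n => ‖∑ k ∈ Finset.range (n + 1), a k * b (n - k)‖ ^ 2 * β n) ∧
      ∑' n : ℕ, ‖∑ k ∈ Finset.range (n + 1), a k * b (n - k)‖ ^ 2 * β n ≤
        K * (∑' n : ℕ, ‖a n‖ ^ 2 * β n) * (∑' n : ℕ, ‖b n‖ ^ 2 * β n) := by
  set u : ℕ → ℝ := fun n => ‖a n‖ ^ 2 * β n with hu
  set v : ℕ → ℝ := fun n => ‖b n‖ ^ 2 * β n with hv
  have hu0 : ∀ n, 0 ≤ u n := fun n => mul_nonneg (sq_nonneg _) (hpos n).le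
  have hv0 : ∀ n, 0 ≤ v n := fun n => mul_nonneg (sq_nonneg _) (hpos n).le
  have hun : Summable fun n => ‖u n‖ := by
    simpa only [Real.norm_of_nonneg (hu0 _)] using ha
  have hvn : Summable fun n => ‖v n‖ := by
    simpa only [Real.norm_of_nonneg (hv0 _)] using hb
  set d : ℕ → ℝ := fun n => ∑ k ∈ Finset.range (n + 1), u k * v (n - k) with hdd
  have hd : Summable d :=
    (summable_norm_sum_mul_range_of_summable_norm hun hvn).of_norm
  have htsum : (∑' n, u n) * (∑' n, v n) = ∑' n, d n :=
    tsum_mul_tsum_eq_tsum_sum_range_of_summable_norm hun hvn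
  have key : ∀ n, ‖∑ k ∈ Finset.range (n + 1), a k * b (n - k)‖ ^ 2 * β n ≤ K * d n := by
    intro n
    have hβnn : ∀ k, (0:ℝ) ≤ β k * β (n - k) := fun k =>
      mul_nonneg (hpos k).le (hpos _).le
    have h1 : ‖∑ k ∈ Finset.range (n + 1), a k * b (n - k)‖ ≤
        ∑ k ∈ Finset.range (n + 1), ‖a k‖ * ‖b (n - k)‖ := by
      refine (norm_sum_le _ _).trans_eq ?_
      simp [norm_mul]
    have hcs := Finset.sum_mul_sq_le_sq_mul_sq (Finset.range (n + 1))
      (fun k => Real.sqrt (1 / (β k * β (n - k))))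
      (fun k => ‖a k‖ * ‖b (n - k)‖ * Real.sqrt (β k * β (n - k)))
    have heq1 : ∀ k ∈ Finset.range (n + 1),
        Real.sqrt (1 / (β k * β (n - k))) *
          (‖a k‖ * ‖b (n - k)‖ * Real.sqrt (β k * β (n - k))) = ‖a k‖ * ‖b (n - k)‖ := by
      intro k _
      rw [one_div, Real.sqrt_inv]
      have hx : Real.sqrt (β k * β (n - k)) ≠ 0 :=
        Real.sqrt_ne_zero'.mpr (mul_pos (hpos k) (hpos (n - k)))
      field_simp
    have heq2 : ∀ k ∈ Finset.range (n + 1),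
        Real.sqrt (1 / (β k * β (n - k))) ^ 2 = 1 / (β k * β (n - k)) := by
      intro k _
      exact Real.sq_sqrt (div_nonneg zero_le_one (hβnn k))
    have heq3 : ∀ k ∈ Finset.range (n + 1),
        (‖a k‖ * ‖b (n - k)‖ * Real.sqrt (β k * β (n - k))) ^ 2 = u k * v (n - k) := by
      intro k _
      rw [mul_pow, mul_pow, Real.sq_sqrt (hβnn k)]
      simp only [hu, hv]
      ring
    rw [Finset.sum_congr rfl heq1, Finset.sum_congr rfl heq2, Finset.sum_congr rfl heq3] at hcs
    have h2 : ‖∑ k ∈ Finset.range (n + 1), a k * b (n - k)‖ ^ 2 ≤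
        (∑ k ∈ Finset.range (n + 1), 1 / (β k * β (n - k))) * d n := by
      calc ‖∑ k ∈ Finset.range (n + 1), a k * b (n - k)‖ ^ 2
          ≤ (∑ k ∈ Finset.range (n + 1), ‖a k‖ * ‖b (n - k)‖) ^ 2 := by
            exact pow_le_pow_left₀ (norm_nonneg _) h1 2
        _ ≤ _ := hcs
    have hd0 : 0 ≤ d n :=
      Finset.sum_nonneg fun k _ => mul_nonneg (hu0 k) (hv0 (n - k))
    calc ‖∑ k ∈ Finset.range (n + 1), a k * b (n - k)‖ ^ 2 * β n
        ≤ ((∑ k ∈ Finset.range (n + 1), 1 / (β k * β (n - k))) * d n) * β n :=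
          mul_le_mul_of_nonneg_right h2 (hpos n).le
      _ = (β n * ∑ k ∈ Finset.range (n + 1), 1 / (β k * β (n - k))) * d n := by ring
      _ ≤ K * d n := mul_le_mul_of_nonneg_right (hK n) hd0
  have hsum : Summable fun n => ‖∑ k ∈ Finset.range (n + 1), a k * b (n - k)‖ ^ 2 * β n := by
    refine Summable.of_nonneg_of_le (fun n => mul_nonneg (sq_nonneg _) (hpos n).le) key
      (hd.mul_left K)
  refine ⟨hsum, ?_⟩
  calc ∑' n : ℕ, ‖∑ k ∈ Finset.range (n + 1), a k * b (n - k)‖ ^ 2 * β n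
      ≤ ∑' n, K * d n := Summable.tsum_le_tsum key hsum (hd.mul_left K)
    _ = K * ∑' n, d n := tsum_mul_left
    _ = K * ((∑' n, u n) * (∑' n, v n)) := by rw [htsum]
    _ = K * (∑' n : ℕ, ‖a n‖ ^ 2 * β n) * (∑' n : ℕ, ‖b n‖ ^ 2 * β n) := by
        simp only [hu, hv]; ring
end

section
/- If Σ_{n≥0} 1/β_n < ∞ and β is slowly oscillating (i.e., there exist constants 0 < c < 1 < C with c·β_n ≤ β_m ≤ C·β_n whenever n/2 ≤ m ≤ 2n), then β_n · B_n = O(1), where B_n = Σ_{k=0}^n 1/(β_k β_{n−k}). -/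
open Filter Topology

/-- If `∑ 1/β n < ∞` and `β` is slowly oscillating, then `β n * B n = O(1)`. -/
theorem stmt4 (β : ℕ → ℝ) (hpos : ∀ n, 0 < β n)
    (hsum : Summable fun n => 1 / β n)
    (c C : ℝ) (hc0 : 0 < c) (hc1 : c < 1) (hC : 1 < C)
    (hso : ∀ m n : ℕ, n ≤ 2 * m → m ≤ 2 * n → c * β n ≤ β m ∧ β m ≤ C * β n) :
    ∃ K : ℝ, ∀ n : ℕ,
      β n * ∑ k ∈ Finset.range (n + 1), 1 / (β k * β (n - k)) ≤ K := by
  set S := ∑' n, 1 / β n with hS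
  refine ⟨2 / c * S, fun n => ?_⟩
  have hpart : ∑ k ∈ Finset.range (n + 1), 1 / β k ≤ S :=
    Summable.sum_le_tsum _ (fun i _ => le_of_lt (one_div_pos.mpr (hpos i))) hsum
  -- helper
  have helper : ∀ x y : ℝ, 0 < x → 0 < y → c * β n ≤ x →
      β n * (1 / (x * y)) ≤ 1 / c * (1 / y) := by
    intro x y hx hy hcx
    have h1 : β n / x ≤ 1 / c := by
      rw [div_le_div_iff₀ hx hc0]
      linarith [mul_comm c (β n)]
    have : β n * (1 / (x * y)) = (β n / x) * (1 / y) := by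
      field_simp
    rw [this]
    exact mul_le_mul_of_nonneg_right h1 (by positivity)
  have key : ∀ k ∈ Finset.range (n + 1),
      β n * (1 / (β k * β (n - k))) ≤ 1 / c * (1 / β k + 1 / β (n - k)) := by
    intro k hk
    rw [Finset.mem_range] at hk
    have hkn : k ≤ n := Nat.lt_succ_iff.mp hk
    by_cases h2k : 2 * k ≤ n
    · have h := (hso (n - k) n (by omega) (by omega)).1
      have := helper (β (n - k)) (β k) (hpos _) (hpos _) h
      rw [mul_comm (β (n-k)) (β k)] at this
      calc β n * (1 / (β k * β (n - k))) ≤ 1 / c * (1 / β k) := this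
        _ ≤ 1 / c * (1 / β k + 1 / β (n - k)) := by
            have := hpos (n - k)
            have hc' : 0 < 1 / c := by positivity
            nlinarith [one_div_pos.mpr (hpos (n - k))]
    · have h := (hso k n (by omega) (by omega)).1
      have := helper (β k) (β (n - k)) (hpos _) (hpos _) h
      calc β n * (1 / (β k * β (n - k))) ≤ 1 / c * (1 / β (n - k)) := this
        _ ≤ 1 / c * (1 / β k + 1 / β (n - k)) := by
            nlinarith [one_div_pos.mpr (hpos k), one_div_pos.mpr hc0]
  calc β n * ∑ k ∈ Finset.range (n + 1), 1 / (β k * β (n - k))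
      = ∑ k ∈ Finset.range (n + 1), β n * (1 / (β k * β (n - k))) := by
        rw [Finset.mul_sum]
    _ ≤ ∑ k ∈ Finset.range (n + 1), 1 / c * (1 / β k + 1 / β (n - k)) :=
        Finset.sum_le_sum key
    _ = 1 / c * (∑ k ∈ Finset.range (n + 1), 1 / β k
          + ∑ k ∈ Finset.range (n + 1), 1 / β (n - k)) := by
        rw [← Finset.mul_sum, Finset.sum_add_distrib]
    _ = 1 / c * (∑ k ∈ Finset.range (n + 1), 1 / β k
          + ∑ k ∈ Finset.range (n + 1), 1 / β k) := by
        have hrefl : ∑ k ∈ Finset.range (n + 1), 1 / β (n - k)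
            = ∑ k ∈ Finset.range (n + 1), 1 / β k := by
          rw [← Finset.sum_range_reflect (fun k => 1 / β k) (n + 1)]
          exact Finset.sum_congr rfl fun k _ => by simp
        rw [hrefl]
    _ ≤ 1 / c * (S + S) :=
        mul_le_mul_of_nonneg_left (add_le_add hpart hpart) (by positivity)
    _ = 2 / c * S := by ring
end

section
/- Let γ_n = e^{n/log n} for n ≥ 2 (and γ_0 = γ_1 = 1). Then sup_n (γ_n · Σ_{k=0}^n 1/(γ_k γ_{n−k})) < ∞; consequently H²(γ) is an algebra. -/
open Filter Topology

open Real Finset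

set_option maxHeartbeats 1000000



noncomputable def gfun (m : ℕ) : ℝ := if m < 4096 then 8 else 2 / ((m : ℝ) * ((m : ℝ) - 1))

lemma gfun_nonneg (m : ℕ) : 0 ≤ gfun m := by
  unfold gfun
  split
  · norm_num
  · rename_i h
    have h4 : (4096 : ℝ) ≤ (m : ℝ) := by exact_mod_cast Nat.le_of_not_lt h
    have h1 : (0:ℝ) < (m : ℝ) * ((m : ℝ) - 1) := by nlinarith
    positivity

-- telescoping auxiliary
noncomputable def wfun (k : ℕ) : ℝ := if k < 2 then 0 else 2 / ((k : ℝ) * ((k : ℝ) - 1))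

lemma wfun_nonneg (k : ℕ) : 0 ≤ wfun k := by
  unfold wfun
  split
  · norm_num
  · rename_i h
    have h4 : (2 : ℝ) ≤ (k : ℝ) := by exact_mod_cast Nat.le_of_not_lt h
    have h1 : (0:ℝ) < (k : ℝ) * ((k : ℝ) - 1) := by nlinarith
    positivity

lemma sum_wfun_le' (n : ℕ) (hn : 2 ≤ n) :
    ∑ k ∈ range n, wfun k ≤ 2 - 2 / ((n : ℝ) - 1) := by
  induction n, hn using Nat.le_induction with
  | base => simp [Finset.sum_range_succ, wfun]; norm_num
  | succ n hn ih =>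
    rw [Finset.sum_range_succ]
    have hw : wfun n = 2 / ((n : ℝ) * ((n : ℝ) - 1)) := by
      unfold wfun; rw [if_neg (by omega)]
    have h2 : (2:ℝ) ≤ (n : ℝ) := by exact_mod_cast hn
    have hne1 : (n:ℝ) - 1 ≠ 0 := by linarith
    have hne0 : (n:ℝ) ≠ 0 := by linarith
    have key : 2 / ((n:ℝ) * ((n:ℝ) - 1)) = 2 / ((n:ℝ) - 1) - 2 / (n:ℝ) := by
      field_simp
      ring
    push_cast
    simp only [add_sub_cancel_right]
    rw [hw, key]
    have hrec : 2 - 2 / ((n:ℝ) - 1) + (2 / ((n:ℝ) - 1) - 2 / (n:ℝ)) = 2 - 2/(n:ℝ) := by ring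
    linarith [ih]

lemma sum_wfun_le (n : ℕ) : ∑ k ∈ range n, wfun k ≤ 2 := by
  rcases le_or_gt 2 n with h | h
  · have := sum_wfun_le' n h
    have h2 : (2:ℝ) ≤ (n : ℝ) := by exact_mod_cast h
    have h3 : (0:ℝ) < (n:ℝ) - 1 := by linarith
    have : 0 ≤ 2 / ((n:ℝ) - 1) := by positivity
    linarith [sum_wfun_le' n h]
  · interval_cases n <;> simp [wfun]

lemma sum_gfun_le (n : ℕ) : ∑ k ∈ range n, gfun k ≤ 32770 := by
  have hle : ∀ k, gfun k ≤ (if k < 4096 then (8:ℝ) else 0) + wfun k := by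
    intro k
    unfold gfun wfun
    by_cases h : k < 4096
    · rw [if_pos h, if_pos h]
      split
      · norm_num
      · rename_i h2
        have h4 : (2 : ℝ) ≤ (k : ℝ) := by exact_mod_cast Nat.le_of_not_lt h2
        have h1 : (0:ℝ) < (k : ℝ) * ((k : ℝ) - 1) := by nlinarith
        have : 0 ≤ 2 / ((k : ℝ) * ((k : ℝ) - 1)) := by positivity
        linarith
    · rw [if_neg h, if_neg h, if_neg (by omega)]
      simp
  calc ∑ k ∈ range n, gfun k
      ≤ ∑ k ∈ range n, ((if k < 4096 then (8:ℝ) else 0) + wfun k) :=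
        Finset.sum_le_sum fun k _ => hle k
    _ = (∑ k ∈ range n, (if k < 4096 then (8:ℝ) else 0)) + ∑ k ∈ range n, wfun k :=
        Finset.sum_add_distrib
    _ ≤ 32768 + 2 := by
        gcongr
        · calc ∑ k ∈ range n, (if k < 4096 then (8:ℝ) else 0)
              = ∑ k ∈ (range n).filter (fun k => k < 4096), (8:ℝ) :=
                (Finset.sum_filter _ _).symm
            _ = ((range n).filter (fun k => k < 4096)).card * 8 := by
                rw [Finset.sum_const, nsmul_eq_mul]
            _ ≤ 4096 * 8 := by
                have hsub : (range n).filter (fun k => k < 4096) ⊆ range 4096 := by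
                  intro k hk
                  simp only [Finset.mem_filter, Finset.mem_range] at hk ⊢
                  exact hk.2
                have := Finset.card_le_card hsub
                simp only [Finset.card_range] at this
                have : (((range n).filter (fun k => k < 4096)).card : ℝ) ≤ 4096 := by
                  exact_mod_cast this
                nlinarith
            _ ≤ 32768 := by norm_num
        · exact sum_wfun_le n
    _ ≤ 32770 := by norm_num



lemma auxA {x N : ℝ} (hx : 2 ≤ x) (h2x : 2 * x ≤ N) (hxN : x ^ 2 ≤ N) :
    N / Real.log N - x / Real.log x - (N - x) / Real.log (N - x) ≤ -(x / (2 * Real.log x)) := by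
  have hNx2 : 2 ≤ N - x := by linarith
  have l1 : 0 < Real.log x := Real.log_pos (by linarith)
  have l2 : 0 < Real.log (N - x) := Real.log_pos (by linarith)
  have l3 : 0 < Real.log N := Real.log_pos (by linarith)
  have m1 : Real.log (N - x) ≤ Real.log N := Real.log_le_log (by linarith) (by linarith)
  have s1 : (N - x) / Real.log N ≤ (N - x) / Real.log (N - x) := by
    gcongr
  have s2 : 2 * Real.log x ≤ Real.log N := by
    have h := Real.log_le_log (by positivity : (0:ℝ) < x ^ 2) hxN
    rwa [Real.log_pow, Nat.cast_ofNat] at h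
  have s3 : x / Real.log N ≤ x / (2 * Real.log x) := by
    gcongr
  
  have e1 : N / Real.log N - (N - x) / Real.log N = x / Real.log N := by
    rw [div_sub_div_same]; ring_nf
  have e2 : x / (2 * Real.log x) - x / Real.log x = -(x / (2 * Real.log x)) := by
    field_simp
    ring
  linarith

lemma auxA1 {x : ℝ} (hx : 2 ≤ x) : Real.exp (-(x / (2 * Real.log x))) ≤ 1 := by
  have l1 : 0 < Real.log x := Real.log_pos (by linarith)
  have : 0 ≤ x / (2 * Real.log x) := by positivity
  exact Real.exp_le_one_iff.mpr (by linarith)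

lemma rpow_sq_aux {x : ℝ} (hx : 0 ≤ x) (a : ℝ) : (x ^ a) ^ 2 = x ^ (2 * a) := by
  rw [← Real.rpow_natCast (x ^ a) 2, ← Real.rpow_mul hx]
  norm_num
  rw [mul_comm]

lemma auxA2 {x : ℝ} (hx : 4096 ≤ x) : Real.exp (-(x / (2 * Real.log x))) ≤ 1 / x ^ 2 := by
  have hx0 : (0:ℝ) < x := by linarith
  have l1 : 0 < Real.log x := Real.log_pos (by linarith)
  have h4 : Real.log x ≤ 4 * x ^ (1/4 : ℝ) := by
    have := Real.log_le_rpow_div hx0.le (by norm_num : (0:ℝ) < 1/4)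
    linarith
  have hq : (0:ℝ) ≤ x ^ (1/4 : ℝ) := Real.rpow_nonneg hx0.le _
  have hsq : (Real.log x) ^ 2 ≤ 16 * x ^ (1/2 : ℝ) := by
    have h := pow_le_pow_left₀ l1.le h4 2
    have e : (x ^ (1/4 : ℝ)) ^ 2 = x ^ (1/2 : ℝ) := by
      rw [rpow_sq_aux hx0.le]; norm_num
    nlinarith [h, e]
  have hhalf : (64 : ℝ) ≤ x ^ (1/2 : ℝ) := by
    have h1 : ((4096 : ℝ)) ^ (1/2 : ℝ) ≤ x ^ (1/2 : ℝ) :=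
      Real.rpow_le_rpow (by norm_num) hx (by norm_num)
    have h2 : ((4096 : ℝ)) ^ (1/2 : ℝ) = 64 := by
      rw [show (4096:ℝ) = 64 ^ (2:ℕ) by norm_num, ← Real.rpow_natCast (64:ℝ) 2,
        ← Real.rpow_mul (by norm_num : (0:ℝ) ≤ 64)]
      norm_num
    linarith
  have hxeq : x ^ (1/2 : ℝ) * x ^ (1/2 : ℝ) = x := by
    rw [← Real.rpow_add hx0]
    norm_num
  have key : 4 * (Real.log x) ^ 2 ≤ x := by nlinarith
  have step : 2 * Real.log x ≤ x / (2 * Real.log x) := by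
    rw [le_div_iff₀ (by positivity)]
    nlinarith
  calc Real.exp (-(x / (2 * Real.log x))) ≤ Real.exp (-(2 * Real.log x)) := by
        apply Real.exp_le_exp.mpr; linarith
    _ = 1 / x ^ 2 := by
        rw [show (2:ℝ) * Real.log x = Real.log (x ^ 2) by rw [Real.log_pow]; norm_num,
          Real.exp_neg, Real.exp_log (by positivity)]
        rw [one_div]

lemma auxB {x N : ℝ} (hx : 2 ≤ x) (h2x : 2 * x ≤ N) (hxN : N < x ^ 2)
    (hN : 10 ^ 16 ≤ N) :
    N / Real.log N - x / Real.log x - (N - x) / Real.log (N - x) ≤ -(2 * Real.log N) := by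
  have hNx2 : 2 ≤ N - x := by linarith
  have l1 : 0 < Real.log x := Real.log_pos (by linarith)
  have l2 : 0 < Real.log (N - x) := Real.log_pos (by linarith)
  have l3 : 0 < Real.log N := Real.log_pos (by linarith)
  have m1 : Real.log (N - x) ≤ Real.log N := Real.log_le_log (by linarith) (by linarith)
  have m2 : Real.log x ≤ Real.log N := Real.log_le_log (by linarith) (by linarith)
  -- x / log N ≤ x / log x
  have s1 : x / Real.log N ≤ x / Real.log x := by gcongr
  have e1 : N / Real.log N - x / Real.log N = (N - x) / Real.log N := by
    rw [div_sub_div_same]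
  -- lower bound on log N - log (N - x)
  have hlog : x / N ≤ Real.log N - Real.log (N - x) := by
    have hd : Real.log ((N - x) / N) = Real.log (N - x) - Real.log N :=
      Real.log_div (by linarith) (by linarith)
    have hle : Real.log ((N - x) / N) ≤ (N - x) / N - 1 :=
      Real.log_le_sub_one_of_pos (by positivity)
    have : (N - x) / N - 1 = -(x / N) := by field_simp; ring
    linarith [hd, hle, this.le, this.ge]
  -- x is at least sqrt N
  have hsqrtN : N ^ (1/2 : ℝ) ≤ x := by
    have h1 : N ^ (1/2 : ℝ) ≤ (x ^ 2) ^ (1/2 : ℝ) :=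
      Real.rpow_le_rpow (by positivity) hxN.le (by norm_num)
    have h2 : (x ^ 2) ^ (1/2 : ℝ) = x := by
      rw [← Real.rpow_natCast x 2, ← Real.rpow_mul (by linarith : (0:ℝ) ≤ x)]
      norm_num
    linarith
  -- log N cubed bound
  have P1 : Real.log N ≤ 12 * N ^ (1/12 : ℝ) := by
    have := Real.log_le_rpow_div (by positivity : (0:ℝ) ≤ N) (by norm_num : (0:ℝ) < 1/12)
    linarith
  have hq : (0:ℝ) ≤ N ^ (1/12 : ℝ) := Real.rpow_nonneg (by positivity) _
  have P2 : (Real.log N) ^ 3 ≤ 1728 * N ^ (1/4 : ℝ) := by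
    have h := pow_le_pow_left₀ l3.le P1 3
    have e : (N ^ (1/12 : ℝ)) ^ 3 = N ^ (1/4 : ℝ) := by
      rw [← Real.rpow_natCast (N ^ (1/12 : ℝ)) 3, ← Real.rpow_mul (by positivity)]
      norm_num
    nlinarith [h, e]
  have P3 : (10 ^ 4 : ℝ) ≤ N ^ (1/4 : ℝ) := by
    have h1 : ((10:ℝ) ^ 16) ^ (1/4 : ℝ) ≤ N ^ (1/4 : ℝ) :=
      Real.rpow_le_rpow (by positivity) hN (by norm_num)
    have h2 : ((10:ℝ) ^ 16) ^ (1/4 : ℝ) = 10 ^ 4 := by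
      rw [show ((10:ℝ) ^ 16) = (10 ^ 4 : ℝ) ^ (4:ℕ) by norm_num,
        ← Real.rpow_natCast ((10:ℝ) ^ 4) 4, ← Real.rpow_mul (by norm_num : (0:ℝ) ≤ 10 ^ 4)]
      norm_num
    linarith
  have hNeq : N ^ (1/4 : ℝ) * N ^ (1/4 : ℝ) = N ^ (1/2 : ℝ) := by
    rw [← Real.rpow_add (by positivity)]
    norm_num
  have hq4 : (0:ℝ) ≤ N ^ (1/4 : ℝ) := Real.rpow_nonneg (by positivity) _
  have P4 : 4 * (Real.log N) ^ 3 ≤ N ^ (1/2 : ℝ) := by nlinarith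
  have P5 : 4 * (Real.log N) ^ 3 ≤ x := by linarith
  -- main chain
  have A : x / 2 ≤ (N - x) * (Real.log N - Real.log (N - x)) := by
    have hNpos : (0:ℝ) < N := by linarith
    have h1 : (N / 2) * (x / N) ≤ (N - x) * (Real.log N - Real.log (N - x)) := by
      apply mul_le_mul (by linarith) hlog (by positivity) (by linarith)
    have h2 : (N / 2) * (x / N) = x / 2 := by field_simp
    linarith
  have B : (N - x) / Real.log (N - x) - (N - x) / Real.log N =
      ((N - x) * (Real.log N - Real.log (N - x))) / (Real.log (N - x) * Real.log N) := by
    field_simp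
  have C : (x / 2) / (Real.log N * Real.log N) ≤
      ((N - x) * (Real.log N - Real.log (N - x))) / (Real.log (N - x) * Real.log N) := by
    have hnum : 0 ≤ x / 2 := by linarith
    have hden : Real.log (N - x) * Real.log N ≤ Real.log N * Real.log N :=
      mul_le_mul_of_nonneg_right m1 l3.le
    exact div_le_div₀ (le_trans hnum A) A (by positivity) hden
  have D : 2 * Real.log N ≤ (x / 2) / (Real.log N * Real.log N) := by
    rw [le_div_iff₀ (by positivity)]
    nlinarith [P5, sq_nonneg (Real.log N)]
  linarith

lemma inv_sq_le_gaux {x : ℝ} (hx : 2 ≤ x) : 1 / x ^ 2 ≤ 2 / (x * (x - 1)) := by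
  rw [div_le_div_iff₀ (by positivity) (by nlinarith)]
  nlinarith

lemma term_bound {γ : ℕ → ℝ} (h0 : γ 0 = 1) (h1 : γ 1 = 1)
    (hγ : ∀ n : ℕ, 2 ≤ n → γ n = Real.exp ((n : ℝ) / Real.log n))
    {n k : ℕ} (hn : 10 ^ 16 ≤ n) (h2k : 2 * k ≤ n) :
    γ n / (γ k * γ (n - k)) ≤ gfun k := by
  have hkn : k ≤ n := by omega
  have hn2 : 2 ≤ n := by omega
  have hγn : γ n = Real.exp ((n : ℝ) / Real.log n) := hγ n hn2
  have hnR : (10 ^ 16 : ℝ) ≤ (n : ℝ) := by exact_mod_cast hn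
  match k, h2k with
  | 0, _ =>
    have : γ n / (γ 0 * γ (n - 0)) = 1 := by
      simp only [h0, Nat.sub_zero, one_mul]
      rw [hγn]
      exact div_self (Real.exp_ne_zero _)
    rw [this]
    unfold gfun
    norm_num
  | 1, _ =>
    have hn1 : 2 ≤ n - 1 := by omega
    have hγn1 : γ (n - 1) = Real.exp (((n - 1 : ℕ) : ℝ) / Real.log ((n - 1 : ℕ) : ℝ)) :=
      hγ (n - 1) hn1
    have hcast : ((n - 1 : ℕ) : ℝ) = (n : ℝ) - 1 := by
      push_cast [Nat.cast_sub (by omega : 1 ≤ n)]; ring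
    have l1 : (1 : ℝ) ≤ Real.log ((n : ℝ) - 1) := by
      rw [Real.le_log_iff_exp_le (by linarith)]
      have := Real.exp_one_lt_d9
      linarith
    have lmono : Real.log ((n : ℝ) - 1) ≤ Real.log (n : ℝ) :=
      Real.log_le_log (by linarith) (by linarith)
    have hd : (n : ℝ) / Real.log (n : ℝ) - ((n : ℝ) - 1) / Real.log ((n : ℝ) - 1) ≤ 1 := by
      have s1 : (n : ℝ) / Real.log (n : ℝ) ≤ (n : ℝ) / Real.log ((n : ℝ) - 1) := by gcongr
      have s2 : (n : ℝ) / Real.log ((n : ℝ) - 1) - ((n : ℝ) - 1) / Real.log ((n : ℝ) - 1)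
          = 1 / Real.log ((n : ℝ) - 1) := by rw [div_sub_div_same]; ring_nf
      have s3 : 1 / Real.log ((n : ℝ) - 1) ≤ 1 := by
        rw [div_le_one (by linarith)]; exact l1
      linarith
    have : γ n / (γ 1 * γ (n - 1)) =
        Real.exp ((n : ℝ) / Real.log (n : ℝ) - ((n : ℝ) - 1) / Real.log ((n : ℝ) - 1)) := by
      rw [h1, one_mul, hγn, hγn1, hcast, ← Real.exp_sub]
    rw [this]
    unfold gfun
    rw [if_pos (by norm_num)]
    have := Real.exp_one_lt_d9
    calc Real.exp ((n : ℝ) / Real.log (n : ℝ) - ((n : ℝ) - 1) / Real.log ((n : ℝ) - 1))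
        ≤ Real.exp 1 := Real.exp_le_exp.mpr hd
      _ ≤ 8 := by linarith
  | (m + 2), h2k =>
    set k := m + 2 with hkdef
    have hk2 : 2 ≤ k := by omega
    have hnk2 : 2 ≤ n - k := by omega
    have hγk : γ k = Real.exp ((k : ℝ) / Real.log k) := hγ k hk2
    have hγnk : γ (n - k) = Real.exp (((n - k : ℕ) : ℝ) / Real.log ((n - k : ℕ) : ℝ)) :=
      hγ (n - k) hnk2
    have hcast : ((n - k : ℕ) : ℝ) = (n : ℝ) - (k : ℝ) := by
      push_cast [Nat.cast_sub hkn]; ring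
    have hxR : (2 : ℝ) ≤ (k : ℝ) := by exact_mod_cast hk2
    have h2xR : 2 * (k : ℝ) ≤ (n : ℝ) := by exact_mod_cast h2k
    have heq : γ n / (γ k * γ (n - k)) =
        Real.exp ((n : ℝ) / Real.log (n : ℝ) - (k : ℝ) / Real.log (k : ℝ)
          - ((n : ℝ) - (k : ℝ)) / Real.log ((n : ℝ) - (k : ℝ))) := by
      rw [hγn, hγk, hγnk, hcast, ← Real.exp_add, ← Real.exp_sub]
      ring_nf
    rw [heq]
    by_cases hc : (k : ℝ) ^ 2 ≤ (n : ℝ)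
    · have hA := auxA hxR h2xR hc
      have hA' := Real.exp_le_exp.mpr hA
      by_cases h4 : k < 4096
      · unfold gfun
        rw [if_pos h4]
        have := auxA1 hxR
        linarith
      · unfold gfun
        rw [if_neg h4]
        have hx4 : (4096 : ℝ) ≤ (k : ℝ) := by exact_mod_cast Nat.le_of_not_lt h4
        have := auxA2 hx4
        have hgle := inv_sq_le_gaux hxR
        linarith
    · push_neg at hc
      have hB := auxB hxR h2xR hc hnR
      have hB' := Real.exp_le_exp.mpr hB
      have hexp : Real.exp (-(2 * Real.log (n : ℝ))) = 1 / (n : ℝ) ^ 2 := by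
        rw [show (2:ℝ) * Real.log (n:ℝ) = Real.log ((n:ℝ) ^ 2) by rw [Real.log_pow]; norm_num,
          Real.exp_neg, Real.exp_log (by positivity), one_div]
      have hkn' : (k : ℝ) ≤ (n : ℝ) := by exact_mod_cast hkn
      have hsq : 1 / (n : ℝ) ^ 2 ≤ 1 / (k : ℝ) ^ 2 := by gcongr
      have hgle := inv_sq_le_gaux hxR
      unfold gfun
      split
      · have : 1 / (n : ℝ) ^ 2 ≤ 1 := by
          rw [div_le_one (by positivity)]
          nlinarith
        linarith
      · linarith

lemma gamma_pos {γ : ℕ → ℝ} (h0 : γ 0 = 1) (h1 : γ 1 = 1)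
    (hγ : ∀ n : ℕ, 2 ≤ n → γ n = Real.exp ((n : ℝ) / Real.log n)) (n : ℕ) : 0 < γ n := by
  match n with
  | 0 => rw [h0]; norm_num
  | 1 => rw [h1]; norm_num
  | (m + 2) => rw [hγ (m + 2) (by omega)]; exact Real.exp_pos _

lemma big_sum_bound {γ : ℕ → ℝ} (h0 : γ 0 = 1) (h1 : γ 1 = 1)
    (hγ : ∀ n : ℕ, 2 ≤ n → γ n = Real.exp ((n : ℝ) / Real.log n))
    {n : ℕ} (hn : 10 ^ 16 ≤ n) :
    γ n * ∑ k ∈ range (n + 1), 1 / (γ k * γ (n - k)) ≤ 65600 := by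
  have hpos := gamma_pos h0 h1 hγ
  rw [Finset.mul_sum]
  have step1 : ∀ k ∈ range (n + 1), γ n * (1 / (γ k * γ (n - k))) ≤ gfun (min k (n - k)) := by
    intro k hk
    have hkn : k ≤ n := by simpa [Nat.lt_succ_iff] using hk
    rw [mul_one_div]
    rcases le_or_gt (2 * k) n with h2k | h2k
    · rw [min_eq_left (by omega)]
      exact term_bound h0 h1 hγ hn h2k
    · rw [min_eq_right (by omega)]
      have h2k' : 2 * (n - k) ≤ n := by omega
      have := term_bound h0 h1 hγ hn h2k'
      rwa [Nat.sub_sub_self hkn, mul_comm (γ (n - k))] at this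
  calc ∑ k ∈ range (n + 1), γ n * (1 / (γ k * γ (n - k)))
      ≤ ∑ k ∈ range (n + 1), gfun (min k (n - k)) := Finset.sum_le_sum step1
    _ ≤ ∑ k ∈ range (n + 1), (gfun k + gfun (n - k)) := by
        apply Finset.sum_le_sum
        intro k _
        rcases min_choice k (n - k) with h | h <;> rw [h]
        · have := gfun_nonneg (n - k); linarith
        · have := gfun_nonneg k; linarith
    _ = (∑ k ∈ range (n + 1), gfun k) + ∑ k ∈ range (n + 1), gfun (n - k) :=
        Finset.sum_add_distrib
    _ ≤ 32770 + 32770 := by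
        gcongr
        · exact sum_gfun_le _
        · have hrefl : ∑ k ∈ range (n + 1), gfun (n + 1 - 1 - k) = ∑ k ∈ range (n + 1), gfun k :=
            Finset.sum_range_reflect gfun (n + 1)
          simp only [Nat.add_sub_cancel] at hrefl
          rw [hrefl]
          exact sum_gfun_le _
    _ ≤ 65600 := by norm_num

/-- For `γ n = exp (n / log n)` (`n ≥ 2`, `γ 0 = γ 1 = 1`), one has
`sup_n γ n * B n < ∞`; consequently `H²(γ)` is an algebra (closed under
multiplication of coefficient sequences, i.e. convolution). -/
theorem stmt9 (γ : ℕ → ℝ) (h0 : γ 0 = 1) (h1 : γ 1 = 1)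
    (hγ : ∀ n : ℕ, 2 ≤ n → γ n = Real.exp ((n : ℝ) / Real.log n)) :
    (∃ K : ℝ, ∀ n : ℕ,
        γ n * ∑ k ∈ Finset.range (n + 1), 1 / (γ k * γ (n - k)) ≤ K) ∧
      ∀ a b : ℕ → ℂ, (Summable fun n => ‖a n‖ ^ 2 * γ n) →
        (Summable fun n => ‖b n‖ ^ 2 * γ n) →
        Summable fun n =>
          ‖∑ k ∈ Finset.range (n + 1), a k * b (n - k)‖ ^ 2 * γ n := by
  have hpos := gamma_pos h0 h1 hγ
  set S : ℕ → ℝ := fun n => γ n * ∑ k ∈ Finset.range (n + 1), 1 / (γ k * γ (n - k)) with hS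
  have part1 : ∃ K : ℝ, ∀ n : ℕ, S n ≤ K := by
    refine ⟨65600 + ∑ m ∈ Finset.range (10 ^ 16), |S m|, fun n => ?_⟩
    have habs : 0 ≤ ∑ m ∈ Finset.range (10 ^ 16), |S m| :=
      Finset.sum_nonneg fun m _ => abs_nonneg _
    rcases le_or_gt (10 ^ 16) n with h | h
    · have hb' : S n ≤ 65600 := big_sum_bound h0 h1 hγ h
      linarith
    · have hmem : n ∈ Finset.range (10 ^ 16) := Finset.mem_range.mpr h
      have h1' : |S n| ≤ ∑ m ∈ Finset.range (10 ^ 16), |S m| :=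
        Finset.single_le_sum (fun m _ => abs_nonneg (S m)) hmem
      have := le_abs_self (S n)
      linarith
  refine ⟨part1, ?_⟩
  obtain ⟨K, hK⟩ := part1
  intro a b ha hb
  have hAB : Summable fun x : ℕ × ℕ => (‖a x.1‖ ^ 2 * γ x.1) * (‖b x.2‖ ^ 2 * γ x.2) :=
    ha.mul_of_nonneg hb (fun n => mul_nonneg (by positivity) (hpos n).le)
      (fun n => mul_nonneg (by positivity) (hpos n).le)
  have hd : Summable fun n => ∑ k ∈ Finset.range (n + 1),
      (‖a k‖ ^ 2 * γ k) * (‖b (n - k)‖ ^ 2 * γ (n - k)) :=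
    summable_sum_mul_range_of_summable_mul (f := fun n => ‖a n‖ ^ 2 * γ n)
      (g := fun n => ‖b n‖ ^ 2 * γ n) hAB
  apply Summable.of_nonneg_of_le (fun n => mul_nonneg (by positivity) (hpos n).le) ?_
    (hd.mul_left K)
  intro n
  -- Cauchy-Schwarz
  have CS : ‖∑ k ∈ Finset.range (n + 1), a k * b (n - k)‖ ^ 2 ≤
      (∑ k ∈ Finset.range (n + 1), 1 / (γ k * γ (n - k))) *
      (∑ k ∈ Finset.range (n + 1), (‖a k‖ ^ 2 * γ k) * (‖b (n - k)‖ ^ 2 * γ (n - k))) := by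
    have step1 : ‖∑ k ∈ Finset.range (n + 1), a k * b (n - k)‖ ≤
        ∑ k ∈ Finset.range (n + 1), ‖a k‖ * ‖b (n - k)‖ := by
      refine le_trans (norm_sum_le _ _) ?_
      apply Finset.sum_le_sum
      intro k _
      rw [norm_mul]
    have step2 : ‖∑ k ∈ Finset.range (n + 1), a k * b (n - k)‖ ^ 2 ≤
        (∑ k ∈ Finset.range (n + 1), ‖a k‖ * ‖b (n - k)‖) ^ 2 :=
      pow_le_pow_left₀ (norm_nonneg _) step1 2
    refine le_trans step2 ?_
    apply Finset.sum_sq_le_sum_mul_sum_of_sq_eq_mul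
    · intro k _
      have := hpos k
      have := hpos (n - k)
      positivity
    · intro k _
      have := hpos k
      have := hpos (n - k)
      positivity
    · intro k _
      have hk := (hpos k).ne'
      have hnk := (hpos (n - k)).ne'
      field_simp
  have hsum_nonneg : 0 ≤ ∑ k ∈ Finset.range (n + 1),
      (‖a k‖ ^ 2 * γ k) * (‖b (n - k)‖ ^ 2 * γ (n - k)) :=
    Finset.sum_nonneg fun k _ =>
      mul_nonneg (mul_nonneg (by positivity) (hpos k).le)
        (mul_nonneg (by positivity) (hpos (n - k)).le)
  calc ‖∑ k ∈ Finset.range (n + 1), a k * b (n - k)‖ ^ 2 * γ n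
      ≤ ((∑ k ∈ Finset.range (n + 1), 1 / (γ k * γ (n - k))) *
        (∑ k ∈ Finset.range (n + 1), (‖a k‖ ^ 2 * γ k) * (‖b (n - k)‖ ^ 2 * γ (n - k)))) * γ n :=
        mul_le_mul_of_nonneg_right CS (hpos n).le
    _ = S n * ∑ k ∈ Finset.range (n + 1), (‖a k‖ ^ 2 * γ k) * (‖b (n - k)‖ ^ 2 * γ (n - k)) := by
        rw [hS]; ring
    _ ≤ K * ∑ k ∈ Finset.range (n + 1), (‖a k‖ ^ 2 * γ k) * (‖b (n - k)‖ ^ 2 * γ (n - k)) :=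
        mul_le_mul_of_nonneg_right (hK n) hsum_nonneg
end

section
/- With m_k = 3^k, σ(n) = k for m_{k−1} ≤ n < m_k (σ(0)=1), and β_n = exp(n/σ(n)), one has Σ_{n≥0} 1/β_n < ∞ and lim_{n→∞} β_n^{1/n} = 1. -/
open Filter Topology

lemma log_sq_isLittleO : (fun x : ℝ => Real.log x * Real.log x) =o[atTop] (fun x : ℝ => x) := by
  have h1 : Real.log =o[atTop] fun x : ℝ => x ^ ((1:ℝ)/2) :=
    isLittleO_log_rpow_atTop (by norm_num)
  have h2 := h1.mul_isBigO h1.isBigO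
  refine h2.congr' (EventuallyEq.refl _ _) ?_
  filter_upwards [eventually_gt_atTop (0:ℝ)] with x hx
  rw [← Real.rpow_add hx]
  norm_num

/-- With `σ 0 = 1`, `σ n = k` for `3^(k-1) ≤ n < 3^k`, and `β n = exp (n / σ n)`,
one has `∑ 1/β n < ∞` and `β n ^ (1/n) → 1`. -/
theorem stmt12 (σ : ℕ → ℕ) (hσ0 : σ 0 = 1)
    (hσ : ∀ k n : ℕ, 1 ≤ k → 3 ^ (k - 1) ≤ n → n < 3 ^ k → σ n = k) :
    (Summable fun n : ℕ => 1 / Real.exp ((n : ℝ) / (σ n : ℝ))) ∧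
      Tendsto (fun n : ℕ => Real.exp ((n : ℝ) / (σ n : ℝ)) ^ ((1 : ℝ) / n))
        atTop (𝓝 1) := by
  -- σ n = Nat.log 3 n + 1 for n ≥ 1
  have hσn : ∀ n : ℕ, 1 ≤ n → σ n = Nat.log 3 n + 1 := by
    intro n hn
    refine hσ _ n (Nat.le_add_left _ _) ?_ (Nat.lt_pow_succ_log_self (by norm_num) n)
    simpa using Nat.pow_log_le_self 3 (by omega)
  have hσpos : ∀ n : ℕ, 1 ≤ σ n := by
    intro n
    rcases Nat.eq_zero_or_pos n with rfl | hn
    · omega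
    · rw [hσn n hn]; omega
  -- σ tends to infinity
  have hσtop : Tendsto σ atTop atTop := by
    rw [tendsto_atTop]
    intro b
    filter_upwards [eventually_ge_atTop (3 ^ b)] with n hn
    have h1 : 1 ≤ n := le_trans (Nat.one_le_pow _ _ (by norm_num)) hn
    rw [hσn n h1]
    have := Nat.log_mono_right (b := 3) hn
    rw [Nat.log_pow (by norm_num)] at this
    omega
  -- real bound: σ n ≤ log n + 1 for n ≥ 1
  have hσle : ∀ n : ℕ, 1 ≤ n → (σ n : ℝ) ≤ Real.log n + 1 := by
    intro n hn
    rw [hσn n hn]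
    push_cast
    have h3 : (1:ℝ) ≤ Real.log 3 := by
      rw [← Real.log_exp 1]
      apply Real.log_le_log (Real.exp_pos 1)
      linarith [Real.exp_one_lt_d9]
    have hp : (Nat.log 3 n : ℝ) * Real.log 3 ≤ Real.log n := by
      rw [← Real.log_pow]
      apply Real.log_le_log (by positivity)
      exact_mod_cast Nat.pow_log_le_self 3 (by omega)
    have : (Nat.log 3 n : ℝ) ≤ (Nat.log 3 n : ℝ) * Real.log 3 :=
      le_mul_of_one_le_right (by positivity) h3
    linarith
  -- eventual key inequality : 2 * σ n * log n ≤ n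
  have hkey : ∀ᶠ n : ℕ in atTop, 2 * (σ n : ℝ) * Real.log n ≤ (n : ℝ) := by
    have hbd : ∀ᶠ x : ℝ in atTop, 4 * (Real.log x * Real.log x) ≤ x := by
      have := (log_sq_isLittleO.const_mul_left 4).bound (c := 1) one_pos
      filter_upwards [this, eventually_ge_atTop (1:ℝ)] with x h hx
      have hl : 0 ≤ Real.log x := Real.log_nonneg hx
      rw [Real.norm_eq_abs, Real.norm_eq_abs, abs_of_nonneg (by positivity),
        abs_of_nonneg (by linarith)] at h
      linarith
    filter_upwards [tendsto_natCast_atTop_atTop.eventually hbd,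
      eventually_ge_atTop 3] with n h hn3
    have hn1 : 1 ≤ n := by omega
    have hl1 : (1:ℝ) ≤ Real.log n := by
      rw [← Real.log_exp 1]
      apply Real.log_le_log (Real.exp_pos 1)
      have : Real.exp 1 < 3 := by linarith [Real.exp_one_lt_d9]
      calc Real.exp 1 ≤ 3 := this.le
        _ ≤ (n:ℝ) := by exact_mod_cast hn3
    have h2 := hσle n hn1
    have : 2 * (σ n : ℝ) * Real.log n ≤ 2 * (Real.log n + 1) * Real.log n := by
      apply mul_le_mul_of_nonneg_right _ (by linarith)
      linarith
    calc 2 * (σ n : ℝ) * Real.log n ≤ 2 * (Real.log n + 1) * Real.log n := this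
      _ ≤ 4 * (Real.log n * Real.log n) := by nlinarith
      _ ≤ (n : ℝ) := h
  constructor
  · -- Summability: compare with 1/n^2
    have hsum : Summable fun n : ℕ => 1 / (n : ℝ) ^ 2 := by
      exact_mod_cast Real.summable_one_div_nat_pow.mpr (by norm_num)
    refine summable_of_isBigO_nat hsum (Asymptotics.IsBigO.of_bound 1 ?_)
    filter_upwards [hkey, eventually_ge_atTop 1] with n h hn1
    have hσp : (0:ℝ) < (σ n : ℝ) := by exact_mod_cast hσpos n
    have hnp : (0:ℝ) < (n:ℝ) := by exact_mod_cast hn1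
    have hdiv : 2 * Real.log n ≤ (n : ℝ) / (σ n : ℝ) := by
      rw [le_div_iff₀ hσp]
      nlinarith
    have hexp : Real.exp (2 * Real.log n) ≤ Real.exp ((n:ℝ) / (σ n : ℝ)) :=
      Real.exp_le_exp.mpr hdiv
    have hn2 : Real.exp (2 * Real.log n) = (n:ℝ) ^ 2 := by
      rw [mul_comm, Real.exp_mul, Real.exp_log hnp, Real.rpow_two]
    rw [Real.norm_eq_abs, Real.norm_eq_abs, abs_of_nonneg (by positivity),
      abs_of_nonneg (by positivity), one_mul]
    apply div_le_div_of_nonneg_left one_pos.le (by positivity)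
    rw [← hn2]; exact hexp
  · -- Limit
    have hlim : Tendsto (fun n : ℕ => Real.exp (1 / (σ n : ℝ))) atTop (𝓝 1) := by
      have h0 : Tendsto (fun n : ℕ => 1 / (σ n : ℝ)) atTop (𝓝 0) :=
        tendsto_one_div_atTop_nhds_zero_nat.comp hσtop
      simpa [Function.comp_def] using (Real.continuous_exp.continuousAt (x := 0)).tendsto.comp h0
    refine hlim.congr' ?_
    filter_upwards [eventually_ge_atTop 1] with n hn1
    have hσp : (σ n : ℝ) ≠ 0 := by
      have := hσpos n; positivity
    have hnp : (n : ℝ) ≠ 0 := by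
      have : (0:ℝ) < (n:ℝ) := by exact_mod_cast hn1
      exact this.ne'
    rw [← Real.exp_mul]
    congr 1
    field_simp
end

section
/- Let m_k = 3^k, σ as above, β_n = exp(n/σ(n)), and let f_k(z) = Σ_{m_k/3 ≤ n < m_k/2} z^n. Then ‖f_k‖²_{H²(β)} ≲ k·exp(m_k/(2k)) and ‖f_k²‖_{H²(β)} ≳ k^{3/2}·exp(m_k/(2k)); hence ‖f_k²‖/‖f_k‖² → ∞ as k → ∞, and H²(β) is not an algebra. -/
open Filter Topology

private lemma aux_pow13 (m : ℕ) : 2 * m + 1 ≤ 3 ^ m := by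
  induction m with
  | zero => norm_num
  | succ n ih =>
      have h1 : 1 ≤ 3 ^ n := Nat.one_le_pow _ _ (by norm_num)
      have : (3:ℕ) ^ (n+1) = 3 * 3 ^ n := by ring
      omega

private lemma cube_le_sum13 (k : ℕ) :
    (k : ℝ) ^ 3 ≤ 3 * ∑ j ∈ Finset.range k, ((j : ℝ) + 1) ^ 2 := by
  induction k with
  | zero => simp
  | succ n ih =>
      rw [Finset.sum_range_succ]
      push_cast
      nlinarith [ih, Nat.cast_nonneg (α := ℝ) n]

private lemma sqrt_nat_tendsto13 :
    Tendsto (fun k : ℕ => Real.sqrt k) atTop atTop := by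
  rw [Filter.tendsto_atTop_atTop]
  intro C
  refine ⟨(Nat.ceil (max C 0)) ^ 2, fun k hk => ?_⟩
  have h1 : ((Nat.ceil (max C 0) : ℝ)) ≤ Real.sqrt k := by
    rw [show ((Nat.ceil (max C 0) : ℝ)) = Real.sqrt (((Nat.ceil (max C 0) : ℝ)) ^ 2) from
      (Real.sqrt_sq (by positivity)).symm]
    apply Real.sqrt_le_sqrt

    exact_mod_cast Nat.cast_le.2 hk
  have h2 : max C 0 ≤ (Nat.ceil (max C 0) : ℝ) := Nat.le_ceil _
  calc C ≤ max C 0 := le_max_left _ _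
    _ ≤ _ := le_trans h2 h1

/-- With `m_k = 3^k`, `σ` as in the paper, `β n = exp (n / σ n)` and
`f_k = ∑_{m_k/3 ≤ n < m_k/2} z^n`, one has `‖f_k‖² ≲ k exp(m_k/2k)`,
`‖f_k²‖² ≳ k³ exp(m_k/k)`, hence `‖f_k²‖ / ‖f_k‖² → ∞`: `H²(β)` is not an algebra. -/
theorem stmt13 (σ : ℕ → ℕ) (hσ0 : σ 0 = 1)
    (hσ : ∀ k n : ℕ, 1 ≤ k → 3 ^ (k - 1) ≤ n → n < 3 ^ k → σ n = k)
    (f : ℕ → ℕ → ℝ)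
    (hf : ∀ k n : ℕ, f k n = if 3 ^ (k - 1) ≤ n ∧ 2 * n < 3 ^ k then 1 else 0) :
    (∃ A : ℝ, 0 < A ∧ ∀ k : ℕ, 1 ≤ k →
        (∑' n : ℕ, f k n ^ 2 * Real.exp ((n : ℝ) / (σ n : ℝ))) ≤
          A * k * Real.exp ((3 : ℝ) ^ k / (2 * k))) ∧
    (∃ B : ℝ, 0 < B ∧ ∃ K : ℕ, ∀ k : ℕ, K ≤ k →
        B * (k : ℝ) ^ 3 * Real.exp ((3 : ℝ) ^ k / k) ≤
          ∑' n : ℕ, (∑ i ∈ Finset.range (n + 1), f k i * f k (n - i)) ^ 2 *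
            Real.exp ((n : ℝ) / (σ n : ℝ))) ∧
    Tendsto (fun k : ℕ =>
        Real.sqrt (∑' n : ℕ, (∑ i ∈ Finset.range (n + 1), f k i * f k (n - i)) ^ 2 *
            Real.exp ((n : ℝ) / (σ n : ℝ))) /
          (∑' n : ℕ, f k n ^ 2 * Real.exp ((n : ℝ) / (σ n : ℝ))))
      atTop atTop := by
  have hfval : ∀ k n : ℕ, 3 ^ (k-1) ≤ n → 2 * n < 3 ^ k → f k n = 1 := by
    intro k n h1 h2; rw [hf]; simp [h1, h2]
  have hfzero : ∀ k n : ℕ, ¬(3 ^ (k-1) ≤ n ∧ 2 * n < 3 ^ k) → f k n = 0 := by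
    intro k n h; rw [hf]; simp [h]
  have hfnonneg : ∀ k n : ℕ, 0 ≤ f k n := by
    intro k n; rw [hf]; split <;> norm_num
  -- basic numerics for k ≥ 1
  have hbase : ∀ k : ℕ, 1 ≤ k → ∃ b : ℕ, 2 * b + 1 = 3 ^ k ∧ 2 * k ≤ 3 ^ (k-1) + 1 ∧
      3 ^ k = 3 * 3 ^ (k-1) := by
    intro k hk
    have hodd : Odd ((3:ℕ) ^ k) := Odd.pow (by decide)
    obtain ⟨c, hc⟩ := hodd
    have h2 := aux_pow13 (k-1)
    have h3 : (3:ℕ) ^ k = 3 * 3 ^ (k-1) := by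
      conv_lhs => rw [show k = (k-1) + 1 by omega]
      ring
    exact ⟨c, by omega, by omega, h3⟩
  -- Part 1
  have part1 : ∀ k : ℕ, 1 ≤ k →
      (∑' n : ℕ, f k n ^ 2 * Real.exp ((n : ℝ) / (σ n : ℝ))) ≤
        3 * k * Real.exp ((3 : ℝ) ^ k / (2 * k)) := by
    intro k hk
    obtain ⟨b, hb, hka, h3a⟩ := hbase k hk
    set a := (3:ℕ) ^ (k-1) with ha
    set M := (3:ℕ) ^ k with hM
    have hkR : (0:ℝ) < k := by exact_mod_cast hk
    have hout : ∀ n : ℕ, n ∉ Finset.range (b+1) →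
        f k n ^ 2 * Real.exp ((n : ℝ) / (σ n : ℝ)) = 0 := by
      intro n hn
      rw [Finset.mem_range, not_lt] at hn
      have : f k n = 0 := hfzero k n (by omega)
      rw [this]; ring
    rw [tsum_eq_sum hout]
    set x := Real.exp (1 / (k:ℝ)) with hx
    have hx1 : 1 < x := by
      have := Real.add_one_le_exp (1 / (k:ℝ))
      have : (0:ℝ) < 1 / k := by positivity
      nlinarith [Real.add_one_le_exp (1 / (k:ℝ))]
    have hstep : ∀ n ∈ Finset.range (b+1),
        f k n ^ 2 * Real.exp ((n : ℝ) / (σ n : ℝ)) ≤ x ^ n := by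
      intro n hn
      by_cases hP : a ≤ n ∧ 2 * n < M
      · rw [hfval k n hP.1 hP.2, hσ k n hk hP.1 (by omega)]
        have : ((n:ℝ) / k) = n * (1 / k) := by ring
        rw [one_pow, one_mul, this, Real.exp_nat_mul]
      · rw [hfzero k n hP]
        have : (0:ℝ) ≤ x ^ n := by positivity
        nlinarith [this]
    have hxk : 1 / (k:ℝ) ≤ x - 1 := by
      have := Real.add_one_le_exp (1 / (k:ℝ)); linarith
    have hxpos : (0:ℝ) < x ^ (b+1) := by positivity
    calc ∑ n ∈ Finset.range (b+1), f k n ^ 2 * Real.exp ((n : ℝ) / (σ n : ℝ))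
        ≤ ∑ n ∈ Finset.range (b+1), x ^ n := Finset.sum_le_sum hstep
      _ = (x ^ (b+1) - 1) / (x - 1) := geom_sum_eq (ne_of_gt hx1) _
      _ ≤ x ^ (b+1) / (x - 1) := by
          have hx0 : (0:ℝ) < x - 1 := by linarith
          exact (div_le_div_iff_of_pos_right hx0).2 (by linarith)
      _ ≤ k * x ^ (b+1) := by
          rw [div_le_iff₀ (by linarith)]
          have h1 : 1 ≤ (k:ℝ) * (x - 1) := by
            calc (1:ℝ) = k * (1/k) := by field_simp
              _ ≤ k * (x - 1) := by nlinarith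
          nlinarith
      _ ≤ k * (3 * Real.exp ((3 : ℝ) ^ k / (2 * k))) := by
          apply mul_le_mul_of_nonneg_left ?_ (le_of_lt hkR)
          have hxb : x ^ (b+1) = Real.exp ((b+1) * (1 / (k:ℝ))) := by
            rw [← Real.exp_nat_mul]; push_cast; ring_nf
          rw [hxb]
          have hble : ((b:ℝ)+1) * (1 / k) ≤ (3:ℝ) ^ k / (2*k) + 1 := by
            have hbR : 2 * (b:ℝ) + 1 = (3:ℝ) ^ k := by exact_mod_cast hb
            have h2k : (0:ℝ) < 2*k := by positivity
            have he : ((b:ℝ)+1) * (1/k) = ((3:ℝ)^k + 1)/(2*k) := by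
              have h2 : 2*(b:ℝ)+2 = (3:ℝ)^k+1 := by linarith
              field_simp
              nlinarith [h2, hkR]
            rw [he]
            have h1 : (1:ℝ)/(2*(k:ℝ)) ≤ 1 := by
              rw [div_le_one h2k]
              have : (1:ℝ) ≤ k := by exact_mod_cast hk
              linarith
            calc ((3:ℝ)^k + 1)/(2*k) = (3:ℝ)^k/(2*k) + 1/(2*k) := by ring
              _ ≤ (3:ℝ)^k/(2*k) + 1 := by linarith
          calc Real.exp (((b:ℝ)+1) * (1 / k)) ≤ Real.exp ((3:ℝ)^k/(2*k) + 1) :=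
                Real.exp_le_exp.2 hble
            _ = Real.exp ((3:ℝ)^k/(2*k)) * Real.exp 1 := Real.exp_add _ _
            _ ≤ 3 * Real.exp ((3 : ℝ) ^ k / (2 * k)) := by
                nlinarith [Real.exp_one_lt_d9, Real.exp_pos ((3:ℝ)^k/(2*k))]
      _ = 3 * k * Real.exp ((3 : ℝ) ^ k / (2 * k)) := by ring
  have part2 : ∀ k : ℕ, 1 ≤ k →
      (1/9 : ℝ) * (k:ℝ) ^ 3 * Real.exp ((3:ℝ) ^ k / k) ≤
        ∑' n : ℕ, (∑ i ∈ Finset.range (n + 1), f k i * f k (n - i)) ^ 2 *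
          Real.exp ((n : ℝ) / (σ n : ℝ)) := by
    intro k hk
    obtain ⟨b, hb, hka, h3a⟩ := hbase k hk
    set a := (3:ℕ) ^ (k-1) with ha
    set M := (3:ℕ) ^ k with hM
    have hkR : (0:ℝ) < k := by exact_mod_cast hk
    set MR : ℝ := (3:ℝ) ^ k with hMR
    have hMcast : ((M:ℕ):ℝ) = MR := by rw [hM, hMR]; push_cast; ring
    have hGnn : ∀ n : ℕ, 0 ≤ (∑ i ∈ Finset.range (n + 1), f k i * f k (n - i)) ^ 2 *
        Real.exp ((n : ℝ) / (σ n : ℝ)) :=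
      fun n => mul_nonneg (sq_nonneg _) (Real.exp_pos _).le
    have hczero : ∀ n : ℕ, n ∉ Finset.range (2*b+1) →
        (∑ i ∈ Finset.range (n + 1), f k i * f k (n - i)) ^ 2 *
          Real.exp ((n : ℝ) / (σ n : ℝ)) = 0 := by
      intro n hn
      rw [Finset.mem_range, not_lt] at hn
      have h0 : ∑ i ∈ Finset.range (n + 1), f k i * f k (n - i) = 0 := by
        apply Finset.sum_eq_zero
        intro i hi
        rw [Finset.mem_range] at hi
        by_cases hia : a ≤ i ∧ 2 * i < M
        · have : ¬(a ≤ n - i ∧ 2 * (n - i) < M) := by omega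
          rw [hfzero k (n - i) this]; ring
        · rw [hfzero k i hia]; ring
      rw [h0]; ring
    have hsum : Summable (fun n : ℕ =>
        (∑ i ∈ Finset.range (n + 1), f k i * f k (n - i)) ^ 2 *
          Real.exp ((n : ℝ) / (σ n : ℝ))) :=
      summable_of_ne_finset_zero hczero
    have key : ∀ j ∈ Finset.range k, ((j:ℝ) + 1) ^ 2 * Real.exp ((MR - k) / k) ≤
        (∑ i ∈ Finset.range ((2*b - j) + 1), f k i * f k ((2*b - j) - i)) ^ 2 *
          Real.exp (((2*b - j : ℕ) : ℝ) / (σ (2*b - j) : ℝ)) := by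
      intro j hj
      rw [Finset.mem_range] at hj
      have hσn : σ (2*b - j) = k := hσ k _ hk (by omega) (by omega)
      have hsub : Finset.Icc (b - j) b ⊆ Finset.range ((2*b - j) + 1) := by
        intro i hi
        rw [Finset.mem_Icc] at hi
        rw [Finset.mem_range]
        omega
      have hone : ∀ i ∈ Finset.Icc (b - j) b, f k i * f k ((2*b - j) - i) = 1 := by
        intro i hi
        rw [Finset.mem_Icc] at hi
        rw [hfval k i (by omega) (by omega), hfval k ((2*b - j) - i) (by omega) (by omega)]
        norm_num
      have hcj : ((j:ℝ) + 1) ≤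
          ∑ i ∈ Finset.range ((2*b - j) + 1), f k i * f k ((2*b - j) - i) := by
        have e1 : ((j:ℝ) + 1) = ∑ i ∈ Finset.Icc (b - j) b, (1:ℝ) := by
          rw [Finset.sum_const, Nat.card_Icc]
          have : b + 1 - (b - j) = j + 1 := by omega
          rw [this]
          push_cast
          ring
        rw [e1, ← Finset.sum_congr rfl hone]
        exact Finset.sum_le_sum_of_subset_of_nonneg hsub
          (fun i _ _ => mul_nonneg (hfnonneg k i) (hfnonneg k _))
      have hexp : Real.exp ((MR - k) / k) ≤ Real.exp (((2*b - j : ℕ) : ℝ) / k) := by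
        apply Real.exp_le_exp.2
        have h3 : k ≤ M := by omega
        have h1 : (MR - (k:ℝ)) ≤ ((2*b - j : ℕ) : ℝ) := by
          have h2 : (M - k : ℕ) ≤ 2*b - j := by omega
          calc MR - (k:ℝ) = ((M - k : ℕ) : ℝ) := by
                rw [Nat.cast_sub h3, hMcast]
            _ ≤ _ := Nat.cast_le.2 h2
        exact div_le_div_of_nonneg_right h1 hkR.le
      rw [hσn]
      have hc0 : (0:ℝ) ≤ (j:ℝ) + 1 := by positivity
      exact mul_le_mul (pow_le_pow_left₀ hc0 hcj 2) hexp (Real.exp_pos _).le (sq_nonneg _)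
    have hinj : ∀ x ∈ Finset.range k, ∀ y ∈ Finset.range k,
        2*b - x = 2*b - y → x = y := by
      intro x hx y hy hxy
      rw [Finset.mem_range] at hx hy
      omega
    have h1 : (k:ℝ) ^ 3 / 3 ≤ ∑ j ∈ Finset.range k, ((j:ℝ) + 1) ^ 2 := by
      linarith [cube_le_sum13 k]
    have h2 : Real.exp (MR / k) / 3 ≤ Real.exp ((MR - k) / k) := by
      have he : (MR - (k:ℝ)) / k = MR / k + (-1) := by field_simp; ring
      rw [he, Real.exp_add]
      have h3 : (1/3:ℝ) ≤ Real.exp (-1) := by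
        rw [Real.exp_neg, le_inv_comm₀ (by norm_num) (Real.exp_pos 1)]
        nlinarith [Real.exp_one_lt_d9]
      nlinarith [Real.exp_pos (MR / k), h3]
    calc (1/9 : ℝ) * (k:ℝ) ^ 3 * Real.exp (MR / k)
        = ((k:ℝ) ^ 3 / 3) * (Real.exp (MR / k) / 3) := by ring
      _ ≤ (∑ j ∈ Finset.range k, ((j:ℝ) + 1) ^ 2) * Real.exp ((MR - k) / k) :=
          mul_le_mul h1 h2 (by positivity) (le_trans (by positivity) h1)
      _ = ∑ j ∈ Finset.range k, ((j:ℝ) + 1) ^ 2 * Real.exp ((MR - k) / k) := by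
          rw [Finset.sum_mul]
      _ ≤ ∑ j ∈ Finset.range k,
            (∑ i ∈ Finset.range ((2*b - j) + 1), f k i * f k ((2*b - j) - i)) ^ 2 *
              Real.exp (((2*b - j : ℕ) : ℝ) / (σ (2*b - j) : ℝ)) :=
          Finset.sum_le_sum key
      _ = ∑ n ∈ (Finset.range k).image (fun j => 2*b - j),
            (∑ i ∈ Finset.range (n + 1), f k i * f k (n - i)) ^ 2 *
              Real.exp ((n : ℝ) / (σ n : ℝ)) :=
          (Finset.sum_image (f := fun n : ℕ => (∑ i ∈ Finset.range (n + 1), f k i * f k (n - i)) ^ 2 * Real.exp ((n : ℝ) / (σ n : ℝ))) hinj).symm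
      _ ≤ ∑' n : ℕ, (∑ i ∈ Finset.range (n + 1), f k i * f k (n - i)) ^ 2 *
            Real.exp ((n : ℝ) / (σ n : ℝ)) :=
          Summable.sum_le_tsum _ (fun n _ => hGnn n) hsum
  have hD : ∀ k : ℕ, 1 ≤ k →
      1 ≤ ∑' n : ℕ, f k n ^ 2 * Real.exp ((n : ℝ) / (σ n : ℝ)) := by
    intro k hk
    obtain ⟨b, hb, hka, h3a⟩ := hbase k hk
    have hout : ∀ n : ℕ, n ∉ Finset.range (b+1) →
        f k n ^ 2 * Real.exp ((n : ℝ) / (σ n : ℝ)) = 0 := by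
      intro n hn
      rw [Finset.mem_range, not_lt] at hn
      have : f k n = 0 := hfzero k n (by omega)
      rw [this]; ring
    have hsum : Summable (fun n : ℕ => f k n ^ 2 * Real.exp ((n : ℝ) / (σ n : ℝ))) :=
      summable_of_ne_finset_zero hout
    have hle := Summable.le_tsum hsum (3^(k-1))
      (fun j _ => mul_nonneg (sq_nonneg _) (Real.exp_pos _).le)
    have hval : f k (3^(k-1)) = 1 := hfval k _ le_rfl (by omega)
    calc (1:ℝ) ≤ f k (3^(k-1)) ^ 2 * Real.exp (((3^(k-1) : ℕ) : ℝ) / (σ (3^(k-1)) : ℝ)) := by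
          rw [hval, one_pow, one_mul]
          exact Real.one_le_exp (by positivity)
      _ ≤ _ := hle
  refine ⟨⟨3, by norm_num, part1⟩, ⟨1/9, by norm_num, 1, part2⟩, ?_⟩
  apply Filter.tendsto_atTop_mono' atTop (f₁ := fun k : ℕ => Real.sqrt k / 9) ?_
    (sqrt_nat_tendsto13.atTop_div_const (by norm_num))
  filter_upwards [eventually_ge_atTop 1] with k hk
  have hkR : (0:ℝ) < k := by exact_mod_cast hk
  set E2 : ℝ := Real.exp ((3:ℝ) ^ k / (2 * k)) with hE2def
  have hE2pos : 0 < E2 := Real.exp_pos _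
  have hDpos : (0:ℝ) < ∑' n : ℕ, f k n ^ 2 * Real.exp ((n : ℝ) / (σ n : ℝ)) :=
    lt_of_lt_of_le one_pos (hD k hk)
  have hD3 : ∑' n : ℕ, f k n ^ 2 * Real.exp ((n : ℝ) / (σ n : ℝ)) ≤ 3 * k * E2 := part1 k hk
  have hE2sq : Real.exp ((3:ℝ) ^ k / k) = E2 ^ 2 := by
    rw [sq, hE2def, ← Real.exp_add]
    congr 1
    field_simp
    ring
  have hNs : (1/3 : ℝ) * k * E2 * Real.sqrt k ≤
      Real.sqrt (∑' n : ℕ, (∑ i ∈ Finset.range (n + 1), f k i * f k (n - i)) ^ 2 *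
        Real.exp ((n : ℝ) / (σ n : ℝ))) := by
    have h1 : ((1/3 : ℝ) * k * E2) ^ 2 * k ≤
        ∑' n : ℕ, (∑ i ∈ Finset.range (n + 1), f k i * f k (n - i)) ^ 2 *
          Real.exp ((n : ℝ) / (σ n : ℝ)) := by
      calc ((1/3 : ℝ) * k * E2) ^ 2 * k = (1/9) * (k:ℝ) ^ 3 * E2 ^ 2 := by ring
        _ = (1/9) * (k:ℝ) ^ 3 * Real.exp ((3:ℝ) ^ k / k) := by rw [hE2sq]
        _ ≤ _ := part2 k hk
    calc (1/3 : ℝ) * k * E2 * Real.sqrt k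
        = Real.sqrt (((1/3 : ℝ) * k * E2) ^ 2 * k) := by
          rw [Real.sqrt_mul (sq_nonneg _), Real.sqrt_sq (by positivity)]
      _ ≤ _ := Real.sqrt_le_sqrt h1
  have hdiv := div_le_div₀ (Real.sqrt_nonneg _) hNs hDpos hD3
  have heq : (1/3 : ℝ) * k * E2 * Real.sqrt k / (3 * k * E2) = Real.sqrt k / 9 := by
    rw [div_eq_div_iff (by positivity) (by norm_num)]
    ring
  rw [heq] at hdiv
  exact hdiv
end

section
/- Let m_k = 3^k and define β by β_{m_k} = m_k², β_{n+1} = m_k^{3/m_k} β_n for m_k ≤ n ≤ 2m_k − 1, and β_{n+1} = 9^{1/m_k} m_k^{−3/m_k} β_n for 2m_k ≤ n ≤ m_{k+1} − 1 (with suitable initial values). Then β_{2m_k} = m_k^5, β_{n+1}/β_n → 1, β_n ≳ n² (so Σ 1/β_n < ∞), and β_{2m_k}^{1/2}/β_{m_k} = m_k^{1/2} → ∞; consequently H²(β) is not an algebra. -/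
open Filter Topology

lemma stmt14_pow_pos (k : ℕ) : (0:ℝ) < (3:ℝ) ^ k := by positivity

lemma stmt14_aux1 (β : ℕ → ℝ) (hβm : ∀ k : ℕ, β (3 ^ k) = ((3 : ℝ) ^ k) ^ 2)
    (hrec1 : ∀ k n : ℕ, 3 ^ k ≤ n → n ≤ 2 * 3 ^ k - 1 →
      β (n + 1) = ((3 : ℝ) ^ k) ^ ((3 : ℝ) / (3 : ℝ) ^ k) * β n)
    (k : ℕ) : ∀ j : ℕ, j ≤ 3 ^ k →
    β (3 ^ k + j) = ((3 : ℝ) ^ k) ^ ((3 * j : ℝ) / (3 : ℝ) ^ k) * ((3 : ℝ) ^ k) ^ 2 := by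
  intro j
  induction j with
  | zero => intro _; simp [hβm k]
  | succ j ih =>
    intro hj
    have hj' : j ≤ 3 ^ k := by omega
    have h1 : (1:ℕ) ≤ 3 ^ k := Nat.one_le_pow _ _ (by norm_num)
    have hrec := hrec1 k (3 ^ k + j) (Nat.le_add_right _ _) (by omega)
    have hn : 3 ^ k + (j + 1) = (3 ^ k + j) + 1 := by omega
    rw [hn, hrec, ih hj', ← mul_assoc, ← Real.rpow_add (stmt14_pow_pos k)]
    congr 2
    push_cast
    ring

lemma stmt14_aux2 (β : ℕ → ℝ) (k : ℕ)
    (h2m : β (2 * 3 ^ k) = ((3 : ℝ) ^ k) ^ 5)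
    (hrec2 : ∀ k n : ℕ, 2 * 3 ^ k ≤ n → n ≤ 3 ^ (k + 1) - 1 →
      β (n + 1) = (9 : ℝ) ^ ((1 : ℝ) / (3 : ℝ) ^ k) *
        ((3 : ℝ) ^ k) ^ (-(3 : ℝ) / (3 : ℝ) ^ k) * β n) :
    ∀ j : ℕ, j ≤ 3 ^ k →
    β (2 * 3 ^ k + j) = (9 : ℝ) ^ ((j : ℝ) / (3 : ℝ) ^ k) *
      ((3 : ℝ) ^ k) ^ (-(3 * j : ℝ) / (3 : ℝ) ^ k) * ((3 : ℝ) ^ k) ^ 5 := by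
  intro j
  induction j with
  | zero => intro _; simp [h2m]
  | succ j ih =>
    intro hj
    have hj' : j ≤ 3 ^ k := by omega
    have h1 : (1:ℕ) ≤ 3 ^ k := Nat.one_le_pow _ _ (by norm_num)
    have h3 : (3:ℕ) ^ (k + 1) = 3 * 3 ^ k := by ring
    have hrec := hrec2 k (2 * 3 ^ k + j) (Nat.le_add_right _ _) (by omega)
    have hn : 2 * 3 ^ k + (j + 1) = (2 * 3 ^ k + j) + 1 := by omega
    rw [hn, hrec, ih hj']
    rw [show ∀ a b c d e : ℝ, a * b * (c * d * e) = (a * c) * (b * d) * e from by intros; ring]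
    rw [← Real.rpow_add (by norm_num : (0:ℝ) < 9), ← Real.rpow_add (stmt14_pow_pos k)]
    congr 2 <;> push_cast <;> ring

noncomputable def stmt14_r1 (k : ℕ) : ℝ := ((3:ℝ) ^ k) ^ ((3 : ℝ) / (3 : ℝ) ^ k)
noncomputable def stmt14_r2 (k : ℕ) : ℝ :=
  (9 : ℝ) ^ ((1 : ℝ) / (3 : ℝ) ^ k) * ((3 : ℝ) ^ k) ^ (-(3 : ℝ) / (3 : ℝ) ^ k)

lemma stmt14_div_pow_tendsto (c d : ℝ) :
    Tendsto (fun k : ℕ => (c + d * k) / (3:ℝ) ^ k) atTop (𝓝 0) := by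
  have h1 : Tendsto (fun k : ℕ => c * ((1:ℝ)/3) ^ k) atTop (𝓝 0) := by
    simpa using (tendsto_pow_atTop_nhds_zero_of_lt_one (by norm_num : (0:ℝ) ≤ 1/3)
      (by norm_num)).const_mul c
  have h2 : Tendsto (fun k : ℕ => d * ((k:ℝ) * ((1:ℝ)/3) ^ k)) atTop (𝓝 0) := by
    simpa using (tendsto_self_mul_const_pow_of_lt_one (by norm_num : (0:ℝ) ≤ 1/3)
      (by norm_num)).const_mul d
  have := h1.add h2
  simp only [add_zero] at this
  convert this using 2 with k
  rw [div_eq_mul_inv, ← inv_pow]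
  ring_nf

lemma stmt14_r1_tendsto : Tendsto stmt14_r1 atTop (𝓝 1) := by
  have key : ∀ k, stmt14_r1 k = Real.exp ((0 + (3 * Real.log 3) * k) / (3:ℝ) ^ k) := by
    intro k
    rw [stmt14_r1, Real.rpow_def_of_pos (stmt14_pow_pos k), Real.log_pow]
    congr 1
    push_cast
    ring
  rw [funext key]
  simpa [Function.comp_def] using (Real.continuous_exp.tendsto 0).comp (stmt14_div_pow_tendsto 0 (3 * Real.log 3))

lemma stmt14_r2_tendsto : Tendsto stmt14_r2 atTop (𝓝 1) := by
  have key : ∀ k, stmt14_r2 k =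
      Real.exp ((Real.log 9 + (-(3 * Real.log 3)) * k) / (3:ℝ) ^ k) := by
    intro k
    rw [stmt14_r2, Real.rpow_def_of_pos (stmt14_pow_pos k), Real.log_pow,
      Real.rpow_def_of_pos (by norm_num : (0:ℝ) < 9), ← Real.exp_add]
    congr 1
    push_cast
    ring
  rw [funext key]
  simpa [Function.comp_def] using (Real.continuous_exp.tendsto 0).comp
    (stmt14_div_pow_tendsto (Real.log 9) (-(3 * Real.log 3)))

/-- The weight defined by `β (3^k) = (3^k)²` and the recursions
`β (n+1) = (3^k)^(3/3^k) β n` on `[3^k, 2·3^k - 1]` and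
`β (n+1) = 9^(1/3^k) (3^k)^(−3/3^k) β n` on `[2·3^k, 3^(k+1) − 1]` satisfies
`β (2·3^k) = (3^k)^5`, `β (n+1)/β n → 1`, `β n ≳ n²` (so `∑ 1/β n < ∞`), and
`√(β (2·3^k)) / β (3^k) = (3^k)^{1/2} → ∞`; consequently `H²(β)` is not an algebra. -/
theorem stmt14 (β : ℕ → ℝ) (hpos : ∀ n, 0 < β n)
    (hβm : ∀ k : ℕ, β (3 ^ k) = ((3 : ℝ) ^ k) ^ 2)
    (hrec1 : ∀ k n : ℕ, 3 ^ k ≤ n → n ≤ 2 * 3 ^ k - 1 →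
      β (n + 1) = ((3 : ℝ) ^ k) ^ ((3 : ℝ) / (3 : ℝ) ^ k) * β n)
    (hrec2 : ∀ k n : ℕ, 2 * 3 ^ k ≤ n → n ≤ 3 ^ (k + 1) - 1 →
      β (n + 1) = (9 : ℝ) ^ ((1 : ℝ) / (3 : ℝ) ^ k) *
        ((3 : ℝ) ^ k) ^ (-(3 : ℝ) / (3 : ℝ) ^ k) * β n) :
    (∀ k : ℕ, β (2 * 3 ^ k) = ((3 : ℝ) ^ k) ^ 5) ∧
    Tendsto (fun n : ℕ => β (n + 1) / β n) atTop (𝓝 1) ∧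
    (∃ c : ℝ, 0 < c ∧ ∀ n : ℕ, 1 ≤ n → c * (n : ℝ) ^ 2 ≤ β n) ∧
    (Summable fun n => 1 / β n) ∧
    Tendsto (fun k : ℕ => Real.sqrt (β (2 * 3 ^ k)) / β (3 ^ k)) atTop atTop ∧
    ¬ ∃ C : ℝ, ∀ a b : ℕ → ℂ, (Summable fun n => ‖a n‖ ^ 2 * β n) →
        (Summable fun n => ‖b n‖ ^ 2 * β n) →
        (Summable fun n => ‖∑ k ∈ Finset.range (n + 1), a k * b (n - k)‖ ^ 2 * β n) ∧
          ∑' n : ℕ, ‖∑ k ∈ Finset.range (n + 1), a k * b (n - k)‖ ^ 2 * β n ≤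
            C ^ 2 * (∑' n : ℕ, ‖a n‖ ^ 2 * β n) * (∑' n : ℕ, ‖b n‖ ^ 2 * β n) := by
  have haux1 := stmt14_aux1 β hβm hrec1
  -- Part 1
  have hP1 : ∀ k : ℕ, β (2 * 3 ^ k) = ((3 : ℝ) ^ k) ^ 5 := by
    intro k
    have h := haux1 k (3 ^ k) le_rfl
    rw [two_mul, h]
    have he : (3 * ((3:ℕ) ^ k : ℕ) : ℝ) / (3 : ℝ) ^ k = ((3:ℕ) : ℝ) := by
      push_cast
      field_simp
    rw [he, Real.rpow_natCast]
    ring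
  have haux2 : ∀ k : ℕ, ∀ j : ℕ, j ≤ 3 ^ k →
      β (2 * 3 ^ k + j) = (9 : ℝ) ^ ((j : ℝ) / (3 : ℝ) ^ k) *
        ((3 : ℝ) ^ k) ^ (-(3 * j : ℝ) / (3 : ℝ) ^ k) * ((3 : ℝ) ^ k) ^ 5 :=
    fun k => stmt14_aux2 β k (hP1 k) hrec2
  -- Part 3: lower bound
  have hlb : ∀ n : ℕ, 1 ≤ n → (1/9 : ℝ) * (n : ℝ) ^ 2 ≤ β n := by
    intro n hn
    set k := Nat.log 3 n with hkdef
    have hk1 : 3 ^ k ≤ n := Nat.pow_log_le_self 3 (by omega)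
    have hk2 : n < 3 ^ (k + 1) := Nat.lt_pow_succ_log_self (by norm_num) n
    have h3 : (3:ℕ) ^ (k + 1) = 3 * 3 ^ k := by ring
    have hm1 : (1:ℝ) ≤ (3:ℝ) ^ k := one_le_pow₀ (by norm_num)
    have hmsq : ((3:ℝ) ^ k) ^ 2 ≤ β n := by
      by_cases hc : n ≤ 2 * 3 ^ k
      · obtain ⟨j, hjle, hnj⟩ : ∃ j, j ≤ 3 ^ k ∧ n = 3 ^ k + j := ⟨n - 3 ^ k, by omega, by omega⟩
        rw [hnj, haux1 k j hjle]
        have h1 : (1:ℝ) ≤ ((3:ℝ) ^ k) ^ ((3 * j : ℝ) / (3 : ℝ) ^ k) := by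
          calc (1:ℝ) = ((3:ℝ) ^ k) ^ (0:ℝ) := (Real.rpow_zero _).symm
          _ ≤ _ := Real.rpow_le_rpow_of_exponent_le hm1 (by positivity)
        nlinarith [sq_nonneg ((3:ℝ)^k)]
      · obtain ⟨j, hjle, hnj⟩ : ∃ j, j ≤ 3 ^ k ∧ n = 2 * 3 ^ k + j :=
          ⟨n - 2 * 3 ^ k, by omega, by omega⟩
        rw [hnj, haux2 k j hjle]
        have h9 : (1:ℝ) ≤ (9:ℝ) ^ ((j : ℝ) / (3 : ℝ) ^ k) := by
          calc (1:ℝ) = (9:ℝ) ^ (0:ℝ) := (Real.rpow_zero _).symm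
          _ ≤ _ := Real.rpow_le_rpow_of_exponent_le (by norm_num) (by positivity)
        have h2 : ((3:ℝ) ^ k) ^ 2 ≤
            ((3:ℝ) ^ k) ^ (-(3 * j : ℝ) / (3 : ℝ) ^ k) * ((3 : ℝ) ^ k) ^ 5 := by
          have e5 : ((3:ℝ) ^ k) ^ (5:ℕ) = ((3:ℝ) ^ k) ^ ((5:ℕ):ℝ) := (Real.rpow_natCast _ 5).symm
          rw [e5, ← Real.rpow_add (stmt14_pow_pos k)]
          calc ((3:ℝ) ^ k) ^ 2 = ((3:ℝ) ^ k) ^ ((2:ℕ):ℝ) := (Real.rpow_natCast _ 2).symm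
          _ ≤ _ := by
              apply Real.rpow_le_rpow_of_exponent_le hm1
              have hj3 : (3 * j : ℝ) / (3:ℝ) ^ k ≤ 3 := by
                rw [div_le_iff₀ (stmt14_pow_pos k)]
                have : (j:ℝ) ≤ (3:ℝ) ^ k := by
                  exact_mod_cast Nat.cast_le.mpr hjle |>.trans_eq (by push_cast; ring)
                nlinarith
              push_cast
              rw [neg_div]
              linarith
        nlinarith [mul_pos (stmt14_pow_pos k) (stmt14_pow_pos k),
          le_trans (by nlinarith : (0:ℝ) ≤ ((3:ℝ)^k)^2) h2]
    have hn3 : (n:ℝ) ≤ 3 * (3:ℝ) ^ k := by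
      have : (n:ℝ) ≤ ((3 * 3 ^ k : ℕ) : ℝ) := by exact_mod_cast Nat.le_of_lt_succ (by omega)
      push_cast at this; linarith
    nlinarith [Nat.cast_nonneg (α := ℝ) n]
  refine ⟨hP1, ?_, ⟨1/9, by norm_num, hlb⟩, ?_, ?_, ?_⟩
  -- Part 2: ratio tendsto 1
  · have hcases : ∀ n : ℕ, 1 ≤ n →
        β (n + 1) / β n = stmt14_r1 (Nat.log 3 n) ∨
        β (n + 1) / β n = stmt14_r2 (Nat.log 3 n) := by
      intro n hn
      set k := Nat.log 3 n with hkdef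
      have hk1 : 3 ^ k ≤ n := Nat.pow_log_le_self 3 (by omega)
      have hk2 : n < 3 ^ (k + 1) := Nat.lt_pow_succ_log_self (by norm_num) n
      have h3 : (3:ℕ) ^ (k + 1) = 3 * 3 ^ k := by ring
      have h1 : (1:ℕ) ≤ 3 ^ k := Nat.one_le_pow _ _ (by norm_num)
      by_cases hc : n ≤ 2 * 3 ^ k - 1
      · left
        rw [hrec1 k n hk1 hc, mul_div_assoc, div_self (hpos n).ne', mul_one, stmt14_r1]
      · right
        rw [hrec2 k n (by omega) (by omega), mul_div_assoc, div_self (hpos n).ne', mul_one,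
          stmt14_r2]
    rw [Metric.tendsto_atTop]
    intro ε hε
    obtain ⟨N1, hN1⟩ := Metric.tendsto_atTop.1 stmt14_r1_tendsto ε hε
    obtain ⟨N2, hN2⟩ := Metric.tendsto_atTop.1 stmt14_r2_tendsto ε hε
    refine ⟨3 ^ (max N1 N2), fun n hn => ?_⟩
    have h1 : (1:ℕ) ≤ 3 ^ (max N1 N2) := Nat.one_le_pow _ _ (by norm_num)
    have hn1 : 1 ≤ n := le_trans h1 hn
    have hk : max N1 N2 ≤ Nat.log 3 n := (Nat.le_log_iff_pow_le (by norm_num) (by omega)).2 hn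
    rcases hcases n hn1 with h | h <;> rw [h]
    · exact hN1 _ (le_trans (le_max_left _ _) hk)
    · exact hN2 _ (le_trans (le_max_right _ _) hk)
  -- Part 4: summability
  · rw [← summable_nat_add_iff 1]
    have hS : Summable fun n : ℕ => (9:ℝ) * (1 / ((n:ℝ) + 1) ^ 2) := by
      apply Summable.mul_left
      have := (Real.summable_one_div_nat_pow (p := 2)).2 (by norm_num)
      have h := (summable_nat_add_iff 1).2 this
      simpa using h
    apply Summable.of_nonneg_of_le (fun n => by have := hpos (n+1); positivity)
      (fun n => ?_) hS
    have h := hlb (n + 1) (by omega)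
    rw [mul_one_div, div_le_div_iff₀ (hpos _) (by positivity)]
    push_cast at h ⊢
    nlinarith [hpos (n+1)]
  -- Part 5
  · have heq : ∀ k : ℕ, Real.sqrt (β (2 * 3 ^ k)) / β (3 ^ k) = Real.sqrt 3 ^ k := by
      intro k
      rw [hP1 k, hβm k]
      have h5 : ((3:ℝ) ^ k) ^ 5 = (((3:ℝ) ^ k) ^ 2) ^ 2 * (3:ℝ) ^ k := by ring
      rw [h5, Real.sqrt_mul (by positivity), Real.sqrt_sq (by positivity)]
      rw [mul_comm, mul_div_assoc, div_self (by positivity), mul_one]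
      rw [show ((3:ℝ) ^ k) = ((Real.sqrt 3) ^ k) ^ 2 from by
        rw [← pow_mul, mul_comm, pow_mul, Real.sq_sqrt (by norm_num)]]
      exact Real.sqrt_sq (by positivity)
    rw [funext heq]
    apply tendsto_pow_atTop_atTop_of_one_lt
    nlinarith [Real.sq_sqrt (by norm_num : (0:ℝ) ≤ 3), Real.sqrt_nonneg 3]
  -- Part 6: not an algebra
  · rintro ⟨C, hC⟩
    obtain ⟨k, hk⟩ := pow_unbounded_of_one_lt (C ^ 2) (by norm_num : (1:ℝ) < 3)
    set m := 3 ^ k with hm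
    set a : ℕ → ℂ := fun n => if n = m then 1 else 0 with ha
    have hsupp : ∀ n ∉ ({m} : Finset ℕ), ‖a n‖ ^ 2 * β n = 0 := by
      intro n hn
      simp only [Finset.mem_singleton] at hn
      simp [ha, hn]
    have hsum : Summable fun n => ‖a n‖ ^ 2 * β n := summable_of_ne_finset_zero hsupp
    have htsum : (∑' n : ℕ, ‖a n‖ ^ 2 * β n) = β m := by
      rw [tsum_eq_single m (fun n hn => by simp [ha, hn])]
      simp [ha]
    have hconv : ∀ n : ℕ, (∑ i ∈ Finset.range (n + 1), a i * a (n - i)) =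
        if n = 2 * m then 1 else 0 := by
      intro n
      by_cases hn : n = 2 * m
      · subst hn
        rw [if_pos rfl]
        rw [Finset.sum_eq_single_of_mem m (Finset.mem_range.mpr (by omega))]
        · simp [ha, show 2 * m - m = m by omega]
        · intro i _ hi
          simp [ha, hi]
      · rw [if_neg hn]
        apply Finset.sum_eq_zero
        intro i hi
        rw [Finset.mem_range] at hi
        by_cases him : i = m
        · subst him
          have : n - m ≠ m := by omega
          simp [ha, this]
        · simp [ha, him]
    obtain ⟨hcs, hineq⟩ := hC a a hsum hsum
    have hterm : β (2 * m) ≤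
        ∑' n : ℕ, ‖∑ i ∈ Finset.range (n + 1), a i * a (n - i)‖ ^ 2 * β n := by
      have := Summable.le_tsum hcs (2 * m) (fun j _ => mul_nonneg (by positivity) (hpos j).le)
      rw [hconv (2 * m), if_pos rfl] at this
      simpa using this
    rw [htsum] at hineq
    have h5 := hP1 k
    have h2 := hβm k
    have hmpos : (0:ℝ) < (3:ℝ) ^ k := by positivity
    rw [← hm] at h5 h2
    rw [h2] at hineq
    rw [h5] at hterm
    have hfinal := le_trans hterm hineq
    nlinarith [pow_pos hmpos 4, sq_nonneg C]
end

section
/- H²(β) is an algebra if and only if the map Ψ : ℓ² → B(ℓ²), Ψ(u) = the matrix with (k,l)-entry u_{k+l}·√(β_{k+l}/(β_k β_l)), is a bounded linear map (i.e., there is K with ‖Ψ(u)‖_{B(ℓ²)} ≤ K‖u‖_{ℓ²} for all u ∈ ℓ²). Moreover, Ψ maps ℓ² boundedly into the Hilbert–Schmidt operators if and only if sup_n β_n B_n < ∞, since ‖Ψ(u)‖²_{HS} = Σ_n |u_n|² β_n B_n. -/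
open Filter Topology

private lemma cs_summable {f g : ℕ → ℝ} (hf0 : ∀ n, 0 ≤ f n) (hg0 : ∀ n, 0 ≤ g n)
    (hf : Summable fun n => f n ^ 2) (hg : Summable fun n => g n ^ 2) :
    Summable fun n => f n * g n := by
  refine Summable.of_nonneg_of_le (fun n => mul_nonneg (hf0 n) (hg0 n)) (fun n => ?_)
    ((hf.add hg).div_const 2)
  have := sq_nonneg (f n - g n)
  nlinarith

private lemma cs_tsum {f g : ℕ → ℝ} (hf0 : ∀ n, 0 ≤ f n) (hg0 : ∀ n, 0 ≤ g n)
    (hf : Summable fun n => f n ^ 2) (hg : Summable fun n => g n ^ 2) :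
    ∑' n, f n * g n ≤ Real.sqrt (∑' n, f n ^ 2) * Real.sqrt (∑' n, g n ^ 2) := by
  refine Summable.tsum_le_of_sum_le (cs_summable hf0 hg0 hf hg) (fun s => ?_)
  have h1 : (∑ i ∈ s, f i * g i) ^ 2 ≤ (∑ i ∈ s, f i ^ 2) * ∑ i ∈ s, g i ^ 2 :=
    Finset.sum_mul_sq_le_sq_mul_sq s f g
  have h2 : ∑ i ∈ s, f i ^ 2 ≤ ∑' n, f n ^ 2 := Summable.sum_le_tsum s (fun i _ => sq_nonneg _) hf
  have h3 : ∑ i ∈ s, g i ^ 2 ≤ ∑' n, g n ^ 2 := Summable.sum_le_tsum s (fun i _ => sq_nonneg _) hg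
  have h4 : 0 ≤ ∑ i ∈ s, f i * g i :=
    Finset.sum_nonneg fun i _ => mul_nonneg (hf0 i) (hg0 i)
  have h6 : 0 ≤ ∑ i ∈ s, g i ^ 2 := Finset.sum_nonneg fun i _ => sq_nonneg _
  have hA : 0 ≤ ∑' n, f n ^ 2 := tsum_nonneg fun n => sq_nonneg _
  have hB : 0 ≤ ∑' n, g n ^ 2 := tsum_nonneg fun n => sq_nonneg _
  have h7 : (∑ i ∈ s, f i * g i) ^ 2 ≤ (∑' n, f n ^ 2) * ∑' n, g n ^ 2 :=
    h1.trans (mul_le_mul h2 h3 h6 hA)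
  calc ∑ i ∈ s, f i * g i = Real.sqrt ((∑ i ∈ s, f i * g i) ^ 2) := (Real.sqrt_sq h4).symm
    _ ≤ Real.sqrt ((∑' n, f n ^ 2) * ∑' n, g n ^ 2) := Real.sqrt_le_sqrt h7
    _ = _ := Real.sqrt_mul hA _

private lemma cs_tsum_c {p q : ℕ → ℂ} (hp : Summable fun n => ‖p n‖ ^ 2)
    (hq : Summable fun n => ‖q n‖ ^ 2) :
    Summable (fun n => p n * q n) ∧
      ‖∑' n, p n * q n‖ ≤ Real.sqrt (∑' n, ‖p n‖ ^ 2) * Real.sqrt (∑' n, ‖q n‖ ^ 2) := by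
  have hs : Summable fun n => ‖p n‖ * ‖q n‖ :=
    cs_summable (fun n => norm_nonneg _) (fun n => norm_nonneg _) hp hq
  have h1 : Summable fun n => ‖p n * q n‖ := by simpa [norm_mul] using hs
  refine ⟨h1.of_norm, (norm_tsum_le_tsum_norm h1).trans ?_⟩
  simpa [norm_mul] using
    cs_tsum (f := fun n => ‖p n‖) (g := fun n => ‖q n‖)
      (fun n => norm_nonneg _) (fun n => norm_nonneg _) hp hq

private lemma tsum_shift {M : Type*} [AddCommMonoid M] [TopologicalSpace M] [T2Space M]
    (k : ℕ) (f : ℕ → M) :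
    ∑' l, f l = ∑' n, (if k ≤ n then f (n - k) else 0) := by
  have h := Function.Injective.tsum_eq (g := fun l => k + l) (add_right_injective k)
    (f := fun n => if k ≤ n then f (n - k) else 0) ?_
  · rw [← h]
    simp
  · intro n hn
    simp only [Function.mem_support, ne_eq, ite_eq_right_iff, not_forall] at hn
    obtain ⟨hkn, -⟩ := hn
    exact ⟨n - k, by simp; omega⟩

private lemma summable_shift {f : ℕ → ℂ} (k : ℕ) (hf : Summable f) :
    Summable fun n => if k ≤ n then f (n - k) else 0 := by
  have h := Function.Injective.summable_iff (f := fun n => if k ≤ n then f (n - k) else 0)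
    (g := fun l => k + l) (add_right_injective k) ?_
  · exact h.mp (hf.congr fun l => by simp)
  · intro n hn
    simp only [ite_eq_right_iff]
    intro hkn
    exact absurd ⟨n - k, by simp; omega⟩ hn

private lemma sumInnerAux (β : ℕ → ℝ) (v x y : ℕ → ℂ) (n : ℕ) :
    (∑' k : ℕ, x k * (if k ≤ n then
        v (k + (n - k)) * (Real.sqrt (β (k + (n - k)) / (β k * β (n - k))) : ℂ) * y (n - k)
      else 0))
    = v n * ∑ k ∈ Finset.range (n + 1),
        (Real.sqrt (β n / (β k * β (n - k))) : ℂ) * x k * y (n - k) := by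
  rw [tsum_eq_sum (s := Finset.range (n + 1))
      (fun k hk => by
        rw [if_neg (by simp only [Finset.mem_range] at hk; omega), mul_zero]),
    Finset.mul_sum]
  refine Finset.sum_congr rfl fun k hk => ?_
  have hkn : k ≤ n := by simp only [Finset.mem_range] at hk; omega
  rw [if_pos hkn, Nat.add_sub_cancel' hkn]
  ring

private lemma keyA (β : ℕ → ℝ) (v x y : ℕ → ℂ) (F : Finset ℕ) (hx : ∀ k ∉ F, x k = 0)
    (hrow : ∀ k : ℕ, Summable fun l : ℕ =>
      v (k + l) * (Real.sqrt (β (k + l) / (β k * β l)) : ℂ) * y l) :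
    (∑ k ∈ F, x k * ∑' l : ℕ, v (k + l) * (Real.sqrt (β (k + l) / (β k * β l)) : ℂ) * y l)
      = ∑' n : ℕ, v n * ∑ k ∈ Finset.range (n + 1),
          (Real.sqrt (β n / (β k * β (n - k))) : ℂ) * x k * y (n - k) := by
  have hshift : ∀ k : ℕ,
      (∑' l : ℕ, v (k + l) * (Real.sqrt (β (k + l) / (β k * β l)) : ℂ) * y l)
      = ∑' n : ℕ, (if k ≤ n then
          v (k + (n - k)) * (Real.sqrt (β (k + (n - k)) / (β k * β (n - k))) : ℂ) * y (n - k)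
        else 0) := fun k =>
    tsum_shift k (fun l => v (k + l) * (Real.sqrt (β (k + l) / (β k * β l)) : ℂ) * y l)
  have hsum : ∀ k : ℕ, Summable fun n : ℕ => x k * (if k ≤ n then
      v (k + (n - k)) * (Real.sqrt (β (k + (n - k)) / (β k * β (n - k))) : ℂ) * y (n - k)
    else 0) := fun k =>
    ((summable_shift k (hrow k)).mul_left (x k))
  calc (∑ k ∈ F, x k * ∑' l : ℕ, v (k + l) * (Real.sqrt (β (k + l) / (β k * β l)) : ℂ) * y l)
      = ∑ k ∈ F, ∑' n : ℕ, x k * (if k ≤ n then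
          v (k + (n - k)) * (Real.sqrt (β (k + (n - k)) / (β k * β (n - k))) : ℂ) * y (n - k)
        else 0) :=
        Finset.sum_congr rfl fun k _ => by rw [hshift k]; exact (tsum_mul_left).symm
    _ = ∑' n : ℕ, ∑ k ∈ F, x k * (if k ≤ n then
          v (k + (n - k)) * (Real.sqrt (β (k + (n - k)) / (β k * β (n - k))) : ℂ) * y (n - k)
        else 0) := (Summable.tsum_finsetSum fun k _ => hsum k).symm
    _ = _ := by
        refine tsum_congr fun n => ?_
        rw [← sumInnerAux β v x y n,
          tsum_eq_sum (s := F) (fun k hk => by rw [hx k hk, zero_mul])]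

private lemma keyB (β : ℕ → ℝ) (v x y : ℕ → ℂ) (F : Finset ℕ) (hv : ∀ n ∉ F, v n = 0) :
    (∑' k : ℕ, x k * ∑' l : ℕ, v (k + l) * (Real.sqrt (β (k + l) / (β k * β l)) : ℂ) * y l)
      = ∑ n ∈ F, v n * ∑ k ∈ Finset.range (n + 1),
          (Real.sqrt (β n / (β k * β (n - k))) : ℂ) * x k * y (n - k) := by
  have hterm : ∀ k : ℕ,
      x k * (∑' l : ℕ, v (k + l) * (Real.sqrt (β (k + l) / (β k * β l)) : ℂ) * y l)
      = ∑ n ∈ F, x k * (if k ≤ n then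
          v (k + (n - k)) * (Real.sqrt (β (k + (n - k)) / (β k * β (n - k))) : ℂ) * y (n - k)
        else 0) := by
    intro k
    rw [tsum_shift k (fun l => v (k + l) * (Real.sqrt (β (k + l) / (β k * β l)) : ℂ) * y l),
      ← tsum_mul_left]
    refine tsum_eq_sum fun n hn => ?_
    rcases le_or_gt k n with h | h
    · rw [if_pos h, show k + (n - k) = n from by omega, hv n hn, zero_mul, zero_mul, mul_zero]
    · rw [if_neg (by omega), mul_zero]
  calc (∑' k : ℕ, x k * ∑' l : ℕ, v (k + l) * (Real.sqrt (β (k + l) / (β k * β l)) : ℂ) * y l)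
      = ∑' k : ℕ, ∑ n ∈ F, x k * (if k ≤ n then
          v (k + (n - k)) * (Real.sqrt (β (k + (n - k)) / (β k * β (n - k))) : ℂ) * y (n - k)
        else 0) := tsum_congr hterm
    _ = ∑ n ∈ F, ∑' k : ℕ, x k * (if k ≤ n then
          v (k + (n - k)) * (Real.sqrt (β (k + (n - k)) / (β k * β (n - k))) : ℂ) * y (n - k)
        else 0) := Summable.tsum_finsetSum fun n _ =>
          summable_of_ne_finset_zero (s := Finset.range (n + 1)) fun k hk => by
            rw [if_neg (by simp only [Finset.mem_range] at hk; omega), mul_zero]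
    _ = _ := Finset.sum_congr rfl fun n _ => sumInnerAux β v x y n

private lemma bridge (β : ℕ → ℝ) (hpos : ∀ n, 0 < β n) (a b : ℕ → ℂ) (n : ℕ) :
    (∑ k ∈ Finset.range (n + 1), (Real.sqrt (β n / (β k * β (n - k))) : ℂ) *
        (a k * (Real.sqrt (β k) : ℂ)) * (b (n - k) * (Real.sqrt (β (n - k)) : ℂ)))
      = (Real.sqrt (β n) : ℂ) * ∑ k ∈ Finset.range (n + 1), a k * b (n - k) := by
  rw [Finset.mul_sum]
  refine Finset.sum_congr rfl fun k _ => ?_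
  have hr : Real.sqrt (β n / (β k * β (n - k))) * (Real.sqrt (β k) * Real.sqrt (β (n - k)))
      = Real.sqrt (β n) := by
    rw [Real.sqrt_div (hpos n).le, Real.sqrt_mul (hpos k).le]
    exact div_mul_cancel₀ _
      (mul_pos (Real.sqrt_pos.2 (hpos k)) (Real.sqrt_pos.2 (hpos (n - k)))).ne'
  calc (Real.sqrt (β n / (β k * β (n - k))) : ℂ) * (a k * (Real.sqrt (β k) : ℂ)) *
          (b (n - k) * (Real.sqrt (β (n - k)) : ℂ))
      = ((Real.sqrt (β n / (β k * β (n - k))) * (Real.sqrt (β k) * Real.sqrt (β (n - k))) : ℝ) : ℂ)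
          * (a k * b (n - k)) := by push_cast; ring
    _ = _ := by rw [hr]

private lemma close_ineq {SF U B M : ℝ} (hSF : 0 ≤ SF) (hU : 0 ≤ U) (hB : 0 ≤ B)
    (h : SF ≤ Real.sqrt U * Real.sqrt (M ^ 2 * SF * B)) : SF ≤ M ^ 2 * U * B := by
  have h1 : Real.sqrt (M ^ 2 * SF * B) = |M| * Real.sqrt SF * Real.sqrt B := by
    rw [Real.sqrt_mul (by positivity), Real.sqrt_mul (sq_nonneg M), Real.sqrt_sq_eq_abs]
  rw [h1] at h
  set R := |M| * Real.sqrt U * Real.sqrt B with hR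
  have hR0 : 0 ≤ R := by positivity
  have h2 : SF ≤ R * Real.sqrt SF := by
    calc SF ≤ Real.sqrt U * (|M| * Real.sqrt SF * Real.sqrt B) := h
      _ = R * Real.sqrt SF := by rw [hR]; ring
  have h3 : Real.sqrt SF ≤ R := by
    rcases eq_or_lt_of_le (Real.sqrt_nonneg SF) with h0 | h0
    · rw [← h0]; exact hR0
    · refine le_of_mul_le_mul_right ?_ h0
      calc Real.sqrt SF * Real.sqrt SF = SF := Real.mul_self_sqrt hSF
        _ ≤ R * Real.sqrt SF := h2
  calc SF = Real.sqrt SF * Real.sqrt SF := (Real.mul_self_sqrt hSF).symm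
    _ ≤ R * R := mul_le_mul h3 h3 (Real.sqrt_nonneg _) hR0
    _ = (|M| * |M|) * ((Real.sqrt U * Real.sqrt U) * (Real.sqrt B * Real.sqrt B)) := by
        rw [hR]; ring
    _ = M ^ 2 * U * B := by
        rw [abs_mul_abs_self, Real.mul_self_sqrt hU, Real.mul_self_sqrt hB, sq]; ring

/-- `H²(β)` is an algebra iff the map `Ψ : ℓ² → B(ℓ²)`,
`Ψ(u) = (u_{k+l} √(β_{k+l}/(β_k β_l)))_{k,l}`, is bounded. Moreover
`‖Ψ(u)‖²_{HS} = ∑ ‖u n‖² β n B n`, so `Ψ` maps `ℓ²` boundedly into the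
Hilbert–Schmidt operators iff `sup_n β n B n < ∞`. -/
theorem stmt19 (β : ℕ → ℝ) (hpos : ∀ n, 0 < β n) :
    ((∃ C : ℝ, ∀ a b : ℕ → ℂ, (Summable fun n => ‖a n‖ ^ 2 * β n) →
        (Summable fun n => ‖b n‖ ^ 2 * β n) →
        (Summable fun n => ‖∑ k ∈ Finset.range (n + 1), a k * b (n - k)‖ ^ 2 * β n) ∧
          ∑' n : ℕ, ‖∑ k ∈ Finset.range (n + 1), a k * b (n - k)‖ ^ 2 * β n ≤
            C ^ 2 * (∑' n : ℕ, ‖a n‖ ^ 2 * β n) * (∑' n : ℕ, ‖b n‖ ^ 2 * β n)) ↔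
      (∃ K : ℝ, ∀ u b : ℕ → ℂ,
        (Summable fun n => ‖u n‖ ^ 2) → (Summable fun n => ‖b n‖ ^ 2) →
        (∀ k : ℕ, Summable fun l : ℕ =>
            u (k + l) * (Real.sqrt (β (k + l) / (β k * β l)) : ℂ) * b l) ∧
        (Summable fun k : ℕ =>
            ‖∑' l : ℕ, u (k + l) * (Real.sqrt (β (k + l) / (β k * β l)) : ℂ) * b l‖ ^ 2) ∧
        ∑' k : ℕ,
            ‖∑' l : ℕ, u (k + l) * (Real.sqrt (β (k + l) / (β k * β l)) : ℂ) * b l‖ ^ 2 ≤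
          K ^ 2 * (∑' n : ℕ, ‖u n‖ ^ 2) * (∑' n : ℕ, ‖b n‖ ^ 2))) ∧
    (∀ u : ℕ → ℂ,
      ∑' p : ℕ × ℕ, ‖u (p.1 + p.2)‖ ^ 2 * (β (p.1 + p.2) / (β p.1 * β p.2)) =
        ∑' n : ℕ, ‖u n‖ ^ 2 *
          (β n * ∑ k ∈ Finset.range (n + 1), 1 / (β k * β (n - k)))) ∧
    ((∃ K : ℝ, ∀ u : ℕ → ℂ, (Summable fun n => ‖u n‖ ^ 2) →
        ∑' p : ℕ × ℕ, ‖u (p.1 + p.2)‖ ^ 2 * (β (p.1 + p.2) / (β p.1 * β p.2)) ≤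
          K * ∑' n : ℕ, ‖u n‖ ^ 2) ↔
      ∃ K : ℝ, ∀ n : ℕ,
        β n * ∑ k ∈ Finset.range (n + 1), 1 / (β k * β (n - k)) ≤ K) := by
  have hnm : ∀ (n : ℕ) (z : ℂ), ‖z * (Real.sqrt (β n) : ℂ)‖ ^ 2 = ‖z‖ ^ 2 * β n := by
    intro n z
    rw [norm_mul, mul_pow, Complex.norm_real, Real.norm_eq_abs,
      abs_of_nonneg (Real.sqrt_nonneg _), Real.sq_sqrt (hpos n).le]
  -- Part 2
  have part2 : ∀ u : ℕ → ℂ,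
      ∑' p : ℕ × ℕ, ‖u (p.1 + p.2)‖ ^ 2 * (β (p.1 + p.2) / (β p.1 * β p.2)) =
        ∑' n : ℕ, ‖u n‖ ^ 2 *
          (β n * ∑ k ∈ Finset.range (n + 1), 1 / (β k * β (n - k))) := by
    intro u
    have hf0 : ∀ p : ℕ × ℕ, 0 ≤ ‖u (p.1 + p.2)‖ ^ 2 * (β (p.1 + p.2) / (β p.1 * β p.2)) := by
      intro p
      have h1 := hpos (p.1 + p.2); have h2 := hpos p.1; have h3 := hpos p.2
      positivity
    have hg0 : ∀ n : ℕ,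
        0 ≤ ‖u n‖ ^ 2 * (β n * ∑ k ∈ Finset.range (n + 1), 1 / (β k * β (n - k))) := by
      intro n
      have hs : 0 ≤ ∑ k ∈ Finset.range (n + 1), 1 / (β k * β (n - k)) :=
        Finset.sum_nonneg fun k _ => by
          have := hpos k; have := hpos (n - k); positivity
      have := hpos n
      positivity
    have hEE : (∑' p : ℕ × ℕ,
          ENNReal.ofReal (‖u (p.1 + p.2)‖ ^ 2 * (β (p.1 + p.2) / (β p.1 * β p.2))))
        = ∑' n : ℕ, ENNReal.ofReal (‖u n‖ ^ 2 *
            (β n * ∑ k ∈ Finset.range (n + 1), 1 / (β k * β (n - k)))) := by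
      rw [ENNReal.tsum_prod']
      have h1 : ∀ k : ℕ,
          (∑' l : ℕ, ENNReal.ofReal (‖u (k + l)‖ ^ 2 * (β (k + l) / (β k * β l))))
          = ∑' n : ℕ, (if k ≤ n then
              ENNReal.ofReal (‖u (k + (n - k))‖ ^ 2 * (β (k + (n - k)) / (β k * β (n - k))))
            else 0) := fun k =>
        tsum_shift k (fun l => ENNReal.ofReal (‖u (k + l)‖ ^ 2 * (β (k + l) / (β k * β l))))
      calc (∑' (k : ℕ) (l : ℕ), ENNReal.ofReal (‖u (k + l)‖ ^ 2 * (β (k + l) / (β k * β l))))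
          = ∑' (k : ℕ) (n : ℕ), (if k ≤ n then
              ENNReal.ofReal (‖u (k + (n - k))‖ ^ 2 * (β (k + (n - k)) / (β k * β (n - k))))
            else 0) := tsum_congr h1
        _ = ∑' (n : ℕ) (k : ℕ), (if k ≤ n then
              ENNReal.ofReal (‖u (k + (n - k))‖ ^ 2 * (β (k + (n - k)) / (β k * β (n - k))))
            else 0) := ENNReal.tsum_comm
        _ = _ := by
            refine tsum_congr fun n => ?_
            rw [tsum_eq_sum (s := Finset.range (n + 1))
              (fun k hk => if_neg (by simp only [Finset.mem_range] at hk; omega))]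
            have e1 : ∀ k ∈ Finset.range (n + 1),
                (if k ≤ n then
                  ENNReal.ofReal (‖u (k + (n - k))‖ ^ 2 * (β (k + (n - k)) / (β k * β (n - k))))
                else 0)
                = ENNReal.ofReal (‖u n‖ ^ 2 * (β n / (β k * β (n - k)))) := by
              intro k hk
              have hkn : k ≤ n := by simp only [Finset.mem_range] at hk; omega
              rw [if_pos hkn, Nat.add_sub_cancel' hkn]
            rw [Finset.sum_congr rfl e1,
              ← ENNReal.ofReal_sum_of_nonneg (fun k _ => by
                have := hpos n; have := hpos k; have := hpos (n - k); positivity)]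
            congr 1
            rw [Finset.mul_sum, Finset.mul_sum]
            refine Finset.sum_congr rfl fun k hk => ?_
            ring
    have e1 : (∑' p : ℕ × ℕ, ‖u (p.1 + p.2)‖ ^ 2 * (β (p.1 + p.2) / (β p.1 * β p.2)))
        = (∑' p : ℕ × ℕ,
            ENNReal.ofReal (‖u (p.1 + p.2)‖ ^ 2 * (β (p.1 + p.2) / (β p.1 * β p.2)))).toReal := by
      rw [ENNReal.tsum_toReal_eq (fun p => ENNReal.ofReal_ne_top)]
      exact tsum_congr fun p => (ENNReal.toReal_ofReal (hf0 p)).symm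
    have e2 : (∑' n : ℕ, ‖u n‖ ^ 2 *
          (β n * ∑ k ∈ Finset.range (n + 1), 1 / (β k * β (n - k))))
        = (∑' n : ℕ, ENNReal.ofReal (‖u n‖ ^ 2 *
            (β n * ∑ k ∈ Finset.range (n + 1), 1 / (β k * β (n - k))))).toReal := by
      rw [ENNReal.tsum_toReal_eq (fun n => ENNReal.ofReal_ne_top)]
      exact tsum_congr fun n => (ENNReal.toReal_ofReal (hg0 n)).symm
    rw [e1, e2, hEE]
  refine ⟨⟨?_, ?_⟩, part2, ?_, ?_⟩
  -- Part 1, forward: algebra ⇒ Ψ bounded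
  · rintro ⟨C, hC⟩
    have hdelta : ∀ k l : ℕ, β (k + l) ≤ C ^ 2 * β k * β l := by
      intro k l
      set a : ℕ → ℂ := fun m => if m = k then (1 : ℂ) else 0 with hadef
      set b : ℕ → ℂ := fun m => if m = l then (1 : ℂ) else 0 with hbdef
      have ha : Summable fun m => ‖a m‖ ^ 2 * β m :=
        summable_of_ne_finset_zero (s := {k}) fun m hm => by
          simp only [Finset.mem_singleton] at hm
          simp [hadef, hm]
      have hb : Summable fun m => ‖b m‖ ^ 2 * β m :=
        summable_of_ne_finset_zero (s := {l}) fun m hm => by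
          simp only [Finset.mem_singleton] at hm
          simp [hbdef, hm]
      obtain ⟨-, hineq⟩ := hC a b ha hb
      have hconv : ∀ n : ℕ, (∑ j ∈ Finset.range (n + 1), a j * b (n - j))
          = if n = k + l then 1 else 0 := by
        intro n
        have : ∀ j ∈ Finset.range (n + 1),
            a j * b (n - j) = if j = k then b (n - j) else 0 := by
          intro j _
          rw [hadef]
          by_cases h : j = k <;> simp [h]
        rw [Finset.sum_congr rfl this, Finset.sum_ite_eq' (Finset.range (n + 1))]
        rw [hbdef]
        simp only [Finset.mem_range]
        split_ifs <;> first | rfl | (exfalso; omega)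
      have e1 : (∑' n : ℕ, ‖∑ j ∈ Finset.range (n + 1), a j * b (n - j)‖ ^ 2 * β n)
          = β (k + l) := by
        rw [tsum_eq_single (k + l) (fun n hn => by rw [hconv n, if_neg hn]; simp)]
        rw [hconv (k + l), if_pos rfl]
        simp
      have e2 : (∑' m : ℕ, ‖a m‖ ^ 2 * β m) = β k := by
        rw [tsum_eq_single k (fun m hm => by simp [hadef, hm])]
        simp [hadef]
      have e3 : (∑' m : ℕ, ‖b m‖ ^ 2 * β m) = β l := by
        rw [tsum_eq_single l (fun m hm => by simp [hbdef, hm])]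
        simp [hbdef]
      rw [e1, e2, e3] at hineq
      exact hineq
    have hwle : ∀ k l : ℕ, Real.sqrt (β (k + l) / (β k * β l)) ≤ |C| := by
      intro k l
      rw [show |C| = Real.sqrt (C ^ 2) from (Real.sqrt_sq_eq_abs C).symm]
      apply Real.sqrt_le_sqrt
      rw [div_le_iff₀ (mul_pos (hpos k) (hpos l))]
      calc β (k + l) ≤ C ^ 2 * β k * β l := hdelta k l
        _ = C ^ 2 * (β k * β l) := by ring
    refine ⟨C, fun u b hu hb => ?_⟩
    have hrow : ∀ k : ℕ, Summable fun l : ℕ =>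
        u (k + l) * (Real.sqrt (β (k + l) / (β k * β l)) : ℂ) * b l := by
      intro k
      have h1 : Summable fun l => ‖u (k + l)‖ ^ 2 := by
        have := hu.comp_injective (add_right_injective k)
        exact this
      have h2 : Summable fun l => ‖u (k + l)‖ * ‖b l‖ :=
        cs_summable (fun _ => norm_nonneg _) (fun _ => norm_nonneg _) h1 hb
      refine Summable.of_norm (Summable.of_nonneg_of_le (fun l => norm_nonneg _)
        (fun l => ?_) (h2.mul_left |C|))
      rw [norm_mul, norm_mul, Complex.norm_real, Real.norm_eq_abs,
        abs_of_nonneg (Real.sqrt_nonneg _)]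
      have hw := hwle k l
      have hu0 := norm_nonneg (u (k + l))
      have hb0 := norm_nonneg (b l)
      nlinarith [mul_nonneg (mul_nonneg (sub_nonneg.2 hw) hu0) hb0]
    refine ⟨hrow, ?_⟩
    have hU0 : 0 ≤ ∑' n : ℕ, ‖u n‖ ^ 2 := tsum_nonneg fun _ => sq_nonneg _
    have hB20 : 0 ≤ ∑' n : ℕ, ‖b n‖ ^ 2 := tsum_nonneg fun _ => sq_nonneg _
    have main : ∀ F : Finset ℕ,
        (∑ k ∈ F, ‖∑' l : ℕ, u (k + l) * (Real.sqrt (β (k + l) / (β k * β l)) : ℂ) * b l‖ ^ 2)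
        ≤ C ^ 2 * (∑' n : ℕ, ‖u n‖ ^ 2) * (∑' n : ℕ, ‖b n‖ ^ 2) := by
      intro F
      set S : ℕ → ℂ :=
        fun k => ∑' l : ℕ, u (k + l) * (Real.sqrt (β (k + l) / (β k * β l)) : ℂ) * b l with hSdef
      set x : ℕ → ℂ := fun k => if k ∈ F then (starRingEnd ℂ) (S k) else 0 with hxdef
      set SF := ∑ k ∈ F, ‖S k‖ ^ 2 with hSFdef
      have hSF0 : 0 ≤ SF := Finset.sum_nonneg fun _ _ => sq_nonneg _
      have hxs : (∑ k ∈ F, x k * S k) = (SF : ℂ) := by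
        rw [hSFdef]
        push_cast
        refine Finset.sum_congr rfl fun k hk => ?_
        rw [hxdef]
        simp only [if_pos hk]
        rw [mul_comm, Complex.mul_conj']
      set a' : ℕ → ℂ := fun k => x k / (Real.sqrt (β k) : ℂ) with ha'def
      set b' : ℕ → ℂ := fun m => b m / (Real.sqrt (β m) : ℂ) with hb'def
      have hsqne : ∀ m : ℕ, ((Real.sqrt (β m) : ℝ) : ℂ) ≠ 0 := fun m =>
        Complex.ofReal_ne_zero.mpr (Real.sqrt_pos.2 (hpos m)).ne'
      have hdiv : ∀ (z : ℂ) (m : ℕ), ‖z / (Real.sqrt (β m) : ℂ)‖ ^ 2 * β m = ‖z‖ ^ 2 := by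
        intro z m
        rw [norm_div, Complex.norm_real, Real.norm_eq_abs,
          abs_of_nonneg (Real.sqrt_nonneg _), div_pow, Real.sq_sqrt (hpos m).le,
          div_mul_cancel₀ _ (hpos m).ne']
      have ha' : Summable fun m => ‖a' m‖ ^ 2 * β m :=
        summable_of_ne_finset_zero (s := F) fun k hk => by
          rw [ha'def]
          simp [hxdef, hk]
      have hb'2 : Summable fun m => ‖b' m‖ ^ 2 * β m := hb.congr fun m => (hdiv (b m) m).symm
      obtain ⟨hconv_sum, hconv_le⟩ := hC a' b' ha' hb'2
      have ea : (∑' m : ℕ, ‖a' m‖ ^ 2 * β m) = SF := by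
        rw [tsum_eq_sum (s := F) (fun k hk => by rw [ha'def]; simp [hxdef, hk]), hSFdef]
        refine Finset.sum_congr rfl fun k hk => ?_
        rw [ha'def]
        simp only []
        rw [hdiv (x k) k, hxdef]
        simp [hk]
      have eb : (∑' m : ℕ, ‖b' m‖ ^ 2 * β m) = ∑' n : ℕ, ‖b n‖ ^ 2 :=
        tsum_congr fun m => hdiv (b m) m
      have hkey := keyA β u x b F (fun k hk => by simp [hxdef, hk]) hrow
      have hbr : ∀ n : ℕ,
          (∑ k ∈ Finset.range (n + 1),
            (Real.sqrt (β n / (β k * β (n - k))) : ℂ) * x k * b (n - k))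
          = (Real.sqrt (β n) : ℂ) *
              ∑ k ∈ Finset.range (n + 1), a' k * b' (n - k) := by
        intro n
        rw [← bridge β hpos a' b' n]
        refine Finset.sum_congr rfl fun k _ => ?_
        rw [ha'def, hb'def]
        simp only []
        rw [div_mul_cancel₀ _ (hsqne k), div_mul_cancel₀ _ (hsqne (n - k))]
      have hkey2 : (SF : ℂ) = ∑' n : ℕ, u n * ((Real.sqrt (β n) : ℂ) *
          ∑ k ∈ Finset.range (n + 1), a' k * b' (n - k)) := by
        rw [← hxs, hkey]
        exact tsum_congr fun n => by rw [hbr n]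
      have hq : Summable fun n : ℕ => ‖(Real.sqrt (β n) : ℂ) *
          ∑ k ∈ Finset.range (n + 1), a' k * b' (n - k)‖ ^ 2 :=
        hconv_sum.congr fun n => by rw [← hnm n, mul_comm]
      have hqe : (∑' n : ℕ, ‖(Real.sqrt (β n) : ℂ) *
          ∑ k ∈ Finset.range (n + 1), a' k * b' (n - k)‖ ^ 2)
          = ∑' n : ℕ, ‖∑ k ∈ Finset.range (n + 1), a' k * b' (n - k)‖ ^ 2 * β n :=
        tsum_congr fun n => by rw [mul_comm, hnm n]
      obtain ⟨-, hcs⟩ := cs_tsum_c hu hq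
      have h6 : (∑' n : ℕ, ‖∑ k ∈ Finset.range (n + 1), a' k * b' (n - k)‖ ^ 2 * β n)
          ≤ C ^ 2 * SF * (∑' n : ℕ, ‖b n‖ ^ 2) := by
        rw [ea, eb] at hconv_le
        exact hconv_le
      have h5 : SF ≤ Real.sqrt (∑' n : ℕ, ‖u n‖ ^ 2) *
          Real.sqrt (C ^ 2 * SF * (∑' n : ℕ, ‖b n‖ ^ 2)) := by
        calc SF = ‖(SF : ℂ)‖ := by
              rw [Complex.norm_real, Real.norm_eq_abs, abs_of_nonneg hSF0]
          _ = ‖∑' n : ℕ, u n * ((Real.sqrt (β n) : ℂ) *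
                ∑ k ∈ Finset.range (n + 1), a' k * b' (n - k))‖ := by rw [← hkey2]
          _ ≤ Real.sqrt (∑' n : ℕ, ‖u n‖ ^ 2) *
                Real.sqrt (∑' n : ℕ, ‖(Real.sqrt (β n) : ℂ) *
                  ∑ k ∈ Finset.range (n + 1), a' k * b' (n - k)‖ ^ 2) := hcs
          _ ≤ _ := by
                refine mul_le_mul_of_nonneg_left ?_ (Real.sqrt_nonneg _)
                apply Real.sqrt_le_sqrt
                rw [hqe]
                exact h6
      exact close_ineq hSF0 hU0 hB20 h5
    have hsummable : Summable fun k : ℕ =>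
        ‖∑' l : ℕ, u (k + l) * (Real.sqrt (β (k + l) / (β k * β l)) : ℂ) * b l‖ ^ 2 :=
      summable_of_sum_le (fun _ => sq_nonneg _) main
    exact ⟨hsummable, Summable.tsum_le_of_sum_le hsummable main⟩
  -- Part 1, reverse: Ψ bounded ⇒ algebra
  · rintro ⟨K, hK⟩
    refine ⟨K, fun a b ha hb => ?_⟩
    set u : ℕ → ℂ := fun n => a n * (Real.sqrt (β n) : ℂ) with hudef
    set y : ℕ → ℂ := fun m => b m * (Real.sqrt (β m) : ℂ) with hydef
    have hu : Summable fun n => ‖u n‖ ^ 2 := ha.congr fun n => (hnm n (a n)).symm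
    have hy : Summable fun n => ‖y n‖ ^ 2 := hb.congr fun n => (hnm n (b n)).symm
    have hUe : (∑' n : ℕ, ‖u n‖ ^ 2) = ∑' n : ℕ, ‖a n‖ ^ 2 * β n :=
      tsum_congr fun n => hnm n (a n)
    have hYe : (∑' n : ℕ, ‖y n‖ ^ 2) = ∑' n : ℕ, ‖b n‖ ^ 2 * β n :=
      tsum_congr fun n => hnm n (b n)
    have hU0 : 0 ≤ ∑' n : ℕ, ‖a n‖ ^ 2 * β n :=
      tsum_nonneg fun n => mul_nonneg (sq_nonneg _) (hpos n).le
    have hB20 : 0 ≤ ∑' n : ℕ, ‖b n‖ ^ 2 * β n :=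
      tsum_nonneg fun n => mul_nonneg (sq_nonneg _) (hpos n).le
    have main : ∀ F : Finset ℕ,
        (∑ n ∈ F, ‖∑ k ∈ Finset.range (n + 1), a k * b (n - k)‖ ^ 2 * β n)
        ≤ K ^ 2 * (∑' n : ℕ, ‖a n‖ ^ 2 * β n) * (∑' n : ℕ, ‖b n‖ ^ 2 * β n) := by
      intro F
      set c : ℕ → ℂ := fun n => ∑ k ∈ Finset.range (n + 1), a k * b (n - k) with hcdef
      set v : ℕ → ℂ :=
        fun n => if n ∈ F then (starRingEnd ℂ) (c n) * (Real.sqrt (β n) : ℂ) else 0 with hvdef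
      have hv0 : ∀ n ∉ F, v n = 0 := fun n hn => by simp [hvdef, hn]
      have hvsum : Summable fun n => ‖v n‖ ^ 2 :=
        summable_of_ne_finset_zero (s := F) fun n hn => by simp [hv0 n hn]
      obtain ⟨hrow', hsq', hbd'⟩ := hK v y hvsum hy
      set SF := ∑ n ∈ F, ‖c n‖ ^ 2 * β n with hSFdef
      have hSF0 : 0 ≤ SF :=
        Finset.sum_nonneg fun n _ => mul_nonneg (sq_nonneg _) (hpos n).le
      have hVe : (∑' n : ℕ, ‖v n‖ ^ 2) = SF := by
        rw [tsum_eq_sum (s := F) (fun n hn => by simp [hv0 n hn]), hSFdef]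
        refine Finset.sum_congr rfl fun n hn => ?_
        rw [hvdef]
        simp only [if_pos hn]
        rw [hnm n]
        simp
      have hkeyB := keyB β v u y F hv0
      have hbr : ∀ n : ℕ,
          (∑ k ∈ Finset.range (n + 1),
            (Real.sqrt (β n / (β k * β (n - k))) : ℂ) * u k * y (n - k))
          = (Real.sqrt (β n) : ℂ) * c n := by
        intro n
        rw [hcdef]
        exact bridge β hpos a b n
      have hsum_eq : (SF : ℂ) =
          ∑' k : ℕ, u k *
            ∑' l : ℕ, v (k + l) * (Real.sqrt (β (k + l) / (β k * β l)) : ℂ) * y l := by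
        rw [hkeyB]
        have hterm : ∀ n ∈ F,
            (v n * ∑ k ∈ Finset.range (n + 1),
              (Real.sqrt (β n / (β k * β (n - k))) : ℂ) * u k * y (n - k))
            = ((‖c n‖ ^ 2 * β n : ℝ) : ℂ) := by
          intro n hn
          rw [hbr n, hvdef]
          simp only [if_pos hn]
          have h1 : ((Real.sqrt (β n) : ℝ) : ℂ) * ((Real.sqrt (β n) : ℝ) : ℂ) = ((β n : ℝ) : ℂ) := by
            rw [← Complex.ofReal_mul, Real.mul_self_sqrt (hpos n).le]
          calc (starRingEnd ℂ) (c n) * (Real.sqrt (β n) : ℂ) * ((Real.sqrt (β n) : ℂ) * c n)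
              = (c n * (starRingEnd ℂ) (c n)) *
                  (((Real.sqrt (β n) : ℝ) : ℂ) * ((Real.sqrt (β n) : ℝ) : ℂ)) := by ring
            _ = ((‖c n‖ ^ 2 * β n : ℝ) : ℂ) := by
                rw [h1, Complex.mul_conj']
                push_cast
                ring
        rw [Finset.sum_congr rfl hterm, hSFdef]
        push_cast
        rfl
      obtain ⟨-, hcs⟩ := cs_tsum_c hu hsq'
      have h6 : (∑' k : ℕ,
          ‖∑' l : ℕ, v (k + l) * (Real.sqrt (β (k + l) / (β k * β l)) : ℂ) * y l‖ ^ 2)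
          ≤ K ^ 2 * SF * (∑' n : ℕ, ‖b n‖ ^ 2 * β n) := by
        rw [hVe, hYe] at hbd'
        exact hbd'
      have h5 : SF ≤ Real.sqrt (∑' n : ℕ, ‖a n‖ ^ 2 * β n) *
          Real.sqrt (K ^ 2 * SF * (∑' n : ℕ, ‖b n‖ ^ 2 * β n)) := by
        calc SF = ‖(SF : ℂ)‖ := by
              rw [Complex.norm_real, Real.norm_eq_abs, abs_of_nonneg hSF0]
          _ = ‖∑' k : ℕ, u k *
                ∑' l : ℕ, v (k + l) * (Real.sqrt (β (k + l) / (β k * β l)) : ℂ) * y l‖ := by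
              rw [← hsum_eq]
          _ ≤ Real.sqrt (∑' n : ℕ, ‖u n‖ ^ 2) *
                Real.sqrt (∑' k : ℕ,
                  ‖∑' l : ℕ, v (k + l) * (Real.sqrt (β (k + l) / (β k * β l)) : ℂ) * y l‖ ^ 2) :=
              hcs
          _ ≤ _ := by
              rw [hUe]
              exact mul_le_mul_of_nonneg_left (Real.sqrt_le_sqrt h6) (Real.sqrt_nonneg _)
      exact close_ineq hSF0 hU0 hB20 h5
    have hsummable : Summable fun n : ℕ =>
        ‖∑ k ∈ Finset.range (n + 1), a k * b (n - k)‖ ^ 2 * β n :=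
      summable_of_sum_le (fun n => mul_nonneg (sq_nonneg _) (hpos n).le) main
    exact ⟨hsummable, Summable.tsum_le_of_sum_le hsummable main⟩
  -- Part 3, forward
  · rintro ⟨K, hK⟩
    refine ⟨K, fun n => ?_⟩
    set δ : ℕ → ℂ := fun m => if m = n then (1 : ℂ) else 0 with hδdef
    have hδ : Summable fun m => ‖δ m‖ ^ 2 :=
      summable_of_ne_finset_zero (s := {n}) fun m hm => by
        simp only [Finset.mem_singleton] at hm
        simp [hδdef, hm]
    have h := hK δ hδ
    rw [part2 δ] at h
    have e1 : (∑' m : ℕ, ‖δ m‖ ^ 2 *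
        (β m * ∑ k ∈ Finset.range (m + 1), 1 / (β k * β (m - k))))
        = β n * ∑ k ∈ Finset.range (n + 1), 1 / (β k * β (n - k)) := by
      rw [tsum_eq_single n (fun m hm => by simp [hδdef, hm])]
      simp [hδdef]
    have e2 : (∑' m : ℕ, ‖δ m‖ ^ 2) = 1 := by
      rw [tsum_eq_single n (fun m hm => by simp [hδdef, hm])]
      simp [hδdef]
    rw [e1, e2, mul_one] at h
    exact h
  -- Part 3, reverse
  · rintro ⟨K, hK⟩
    refine ⟨K, fun u hu => ?_⟩
    rw [part2 u]
    have hB0 : ∀ m : ℕ, 0 ≤ β m * ∑ k ∈ Finset.range (m + 1), 1 / (β k * β (m - k)) := by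
      intro m
      have hs : 0 ≤ ∑ k ∈ Finset.range (m + 1), 1 / (β k * β (m - k)) :=
        Finset.sum_nonneg fun k _ => by
          have := hpos k; have := hpos (m - k); positivity
      have := hpos m
      positivity
    have hle : ∀ m : ℕ, ‖u m‖ ^ 2 *
        (β m * ∑ k ∈ Finset.range (m + 1), 1 / (β k * β (m - k))) ≤ K * ‖u m‖ ^ 2 := by
      intro m
      calc ‖u m‖ ^ 2 * (β m * ∑ k ∈ Finset.range (m + 1), 1 / (β k * β (m - k)))
          ≤ ‖u m‖ ^ 2 * K := mul_le_mul_of_nonneg_left (hK m) (sq_nonneg _)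
        _ = K * ‖u m‖ ^ 2 := mul_comm _ _
    have hsum : Summable fun m => ‖u m‖ ^ 2 *
        (β m * ∑ k ∈ Finset.range (m + 1), 1 / (β k * β (m - k))) :=
      Summable.of_nonneg_of_le (fun m => mul_nonneg (sq_nonneg _) (hB0 m)) hle (hu.mul_left K)
    calc (∑' m : ℕ, ‖u m‖ ^ 2 *
          (β m * ∑ k ∈ Finset.range (m + 1), 1 / (β k * β (m - k))))
        ≤ ∑' m : ℕ, K * ‖u m‖ ^ 2 := Summable.tsum_le_tsum hle hsum (hu.mul_left K)
      _ = K * ∑' m : ℕ, ‖u m‖ ^ 2 := tsum_mul_left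
end
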